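/- arXiv:math/0703321 — 7 statements merged into one kernel-verified Lean document; each statement's English description precedes it below -/
import Mathlib

section
/- Let S ⊆ V be a 3-dimensional subspace and (c₁, c₂, c₃) an orthonormal basis of S. Then there exists a unique linear map m : S → V such that m(w) = π(e, f) for every orthonormal triple (e, f, w) of vectors in S whose matrix of coordinates with respect to (c₁, c₂, c₃) has determinant 1; moreover m preserves inner products, i.e. ⟨m(x), m(y)⟩ = ⟨x, y⟩ for all x, y ∈ S. -/
/-!
Write `p x = (⟪c j, x⟫)ⱼ` for the coordinates of `x ∈ S` and `g = (π(c₁,c₂), π(c₂,c₀), π(c₀,c₁))`.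
Since `π` is bilinear and alternating, `π e f = ∑ₖ (p e ⨯₃ p f)ₖ gₖ`, and for an orthonormal frame
`(e, f, w)` oriented like `c`, Lagrange's identity forces `p w = p e ⨯₃ p f`. Hence
`m w = ∑ₖ (p w)ₖ gₖ` works, and it is the only choice because it is forced on the frames
`(c₁, c₂, c₀)`, `(c₂, c₀, c₁)`, `(c₀, c₁, c₂)`. Finally `g` is orthonormal, so `m` preserves inner
products.
-/

open scoped RealInnerProductSpace
open Matrix

theorem eq_cross_of_det_eq_one {a b w : Fin 3 → ℝ}
    (ha : a ⬝ᵥ a = 1) (hb : b ⬝ᵥ b = 1) (hw : w ⬝ᵥ w = 1) (hab : a ⬝ᵥ b = 0)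
    (hdet : det ![a, b, w] = 1) : w = a ⨯₃ b := by
  have hwab : w ⬝ᵥ a ⨯₃ b = 1 := by
    rw [triple_product_permutation, triple_product_eq_det, hdet]
  -- Lagrange's identity `|a ⨯₃ b|² = |a|²|b|² - (a ⬝ᵥ b)²` makes `|w - a ⨯₃ b|²` vanish
  have hsq : (w - a ⨯₃ b) ⬝ᵥ (w - a ⨯₃ b) = 0 := by
    rw [sub_dotProduct, dotProduct_sub, dotProduct_sub, dotProduct_comm (a ⨯₃ b) w,
      cross_dot_cross, dotProduct_comm b a, ha, hb, hw, hab, hwab]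
    norm_num
  exact sub_eq_zero.mp (dotProduct_self_eq_zero.mp hsq)

section Alternating

variable {R M N : Type*} [CommRing R] [AddCommGroup M] [Module R M] [AddCommGroup N] [Module R N]

def cyclicProducts (π : M →ₗ[R] M →ₗ[R] N) (c : Fin 3 → M) : Fin 3 → N :=
  ![π (c 1) (c 2), π (c 2) (c 0), π (c 0) (c 1)]

theorem LinearMap.IsAlt.apply_sum_smul_sum_smul {π : M →ₗ[R] M →ₗ[R] N} (hπ : π.IsAlt)
    (c : Fin 3 → M) (a b : Fin 3 → R) :
    π (∑ i, a i • c i) (∑ j, b j • c j) = ∑ k, (a ⨯₃ b) k • cyclicProducts π c k := by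
  simp only [Fin.sum_univ_three, map_add, map_smul, LinearMap.add_apply, LinearMap.smul_apply,
    hπ.self_eq_zero, ← hπ.neg (c 0) (c 1), ← hπ.neg (c 1) (c 2), ← hπ.neg (c 2) (c 0),
    cross_apply, cyclicProducts, cons_val_zero, cons_val_one, cons_val]
  module

end Alternating

section Span

variable {𝕜 E ι : Type*} [RCLike 𝕜] [NormedAddCommGroup E] [InnerProductSpace 𝕜 E] [Fintype ι]
  {c : ι → E}

theorem Orthonormal.sum_inner_smul_eq_of_mem_span (hc : Orthonormal 𝕜 c) {x : E}
    (hx : x ∈ Submodule.span 𝕜 (Set.range c)) : ∑ i, inner 𝕜 (c i) x • c i = x := by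
  obtain ⟨a, rfl⟩ := (Submodule.mem_span_range_iff_exists_fun 𝕜).mp hx
  simp_rw [hc.inner_right_fintype]

theorem Orthonormal.inner_eq_sum_mul_of_mem_span (hc : Orthonormal 𝕜 c) {x y : E}
    (hx : x ∈ Submodule.span 𝕜 (Set.range c)) (hy : y ∈ Submodule.span 𝕜 (Set.range c)) :
    inner 𝕜 x y = ∑ i, inner 𝕜 x (c i) * inner 𝕜 (c i) y := by
  conv_lhs => rw [← hc.sum_inner_smul_eq_of_mem_span hx, ← hc.sum_inner_smul_eq_of_mem_span hy]
  simp_rw [hc.inner_sum, inner_conj_symm]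

end Span

section VectorProduct

variable {V : Type*} [NormedAddCommGroup V] [InnerProductSpace ℝ V] {π : V →ₗ[ℝ] V →ₗ[ℝ] V}

noncomputable def cyclicProductMap (π : V →ₗ[ℝ] V →ₗ[ℝ] V) (c : Fin 3 → V) : V →ₗ[ℝ] V :=
  Fintype.linearCombination ℝ (cyclicProducts π c) ∘ₗ LinearMap.pi fun i => innerₛₗ ℝ (c i)

theorem cyclicProductMap_apply (c : Fin 3 → V) (x : V) :
    cyclicProductMap π c x = ∑ i, ⟪c i, x⟫ • cyclicProducts π c i :=
  rfl

def IsProductOnOrientedFrames (π : V →ₗ[ℝ] V →ₗ[ℝ] V) (S : Submodule ℝ V) (c : Fin 3 → V)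
    (m : S →ₗ[ℝ] V) : Prop :=
  ∀ (e f w : V) (_ : e ∈ S) (_ : f ∈ S) (hw : w ∈ S), Orthonormal ℝ ![e, f, w] →
    Matrix.det (Matrix.of fun i j => ⟪c j, ![e, f, w] i⟫) = 1 → m ⟨w, hw⟩ = π e f

section

variable (hπ : ∀ u v : V, Orthonormal ℝ ![u, v] → Orthonormal ℝ ![u, v, π u v])
include hπ

theorem norm_apply_eq_one_of_orthonormal {ι : Type*} {c : ι → V} (hc : Orthonormal ℝ c) {i j : ι}
    (hij : i ≠ j) : ‖π (c i) (c j)‖ = 1 :=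
  (hπ _ _ (by simp [hc.1 i, hc.1 j, hc.2 hij])).1 2

theorem inner_apply_apply_eq_zero_of_orthonormal {ι : Type*} {c : ι → V} (hc : Orthonormal ℝ c)
    {i j k : ι} (hij : i ≠ j) (hik : i ≠ k) (hjk : j ≠ k) :
    ⟪π (c i) (c j), π (c i) (c k)⟫ = 0 := by
  -- `x = (3 c j + 4 c k) / 5` is a unit vector orthogonal to `c i`, so `π (c i) x` is a unit vector
  have hx : ‖(3 / 5 : ℝ) • c j + (4 / 5 : ℝ) • c k‖ = 1 := by
    have h := norm_add_sq_eq_norm_sq_add_norm_sq_real (x := (3 / 5 : ℝ) • c j)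
      (y := (4 / 5 : ℝ) • c k) (by simp [real_inner_smul_left, real_inner_smul_right, hc.2 hjk])
    rw [norm_smul, norm_smul, hc.1 j, hc.1 k] at h
    norm_num at h
    nlinarith [norm_nonneg ((3 / 5 : ℝ) • c j + (4 / 5 : ℝ) • c k)]
  have hix : ⟪c i, (3 / 5 : ℝ) • c j + (4 / 5 : ℝ) • c k⟫ = 0 := by
    simp [inner_add_right, real_inner_smul_right, hc.2 hij, hc.2 hik]
  have h : ‖π (c i) ((3 / 5 : ℝ) • c j + (4 / 5 : ℝ) • c k)‖ = 1 :=
    (hπ _ _ (by simp [hc.1 i, hx, hix])).1 2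
  have hsq := norm_add_sq_real ((3 / 5 : ℝ) • π (c i) (c j)) ((4 / 5 : ℝ) • π (c i) (c k))
  rw [map_add, map_smul, map_smul] at h
  rw [h, norm_smul, norm_smul, norm_apply_eq_one_of_orthonormal hπ hc hij,
    norm_apply_eq_one_of_orthonormal hπ hc hik, real_inner_smul_left, real_inner_smul_right] at hsq
  norm_num at hsq
  linarith

theorem orthonormal_cyclicProducts (hπalt : π.IsAlt) {c : Fin 3 → V} (hc : Orthonormal ℝ c) :
    Orthonormal ℝ (cyclicProducts π c) := by
  have h₀₁ : ⟪π (c 1) (c 2), π (c 2) (c 0)⟫ = 0 := by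
    rw [← hπalt.neg (c 2) (c 1), inner_neg_left,
      inner_apply_apply_eq_zero_of_orthonormal hπ hc (by decide) (by decide) (by decide), neg_zero]
  have h₀₂ : ⟪π (c 1) (c 2), π (c 0) (c 1)⟫ = 0 := by
    rw [← hπalt.neg (c 1) (c 0), inner_neg_right,
      inner_apply_apply_eq_zero_of_orthonormal hπ hc (by decide) (by decide) (by decide), neg_zero]
  have h₁₂ : ⟪π (c 2) (c 0), π (c 0) (c 1)⟫ = 0 := by
    rw [← hπalt.neg (c 0) (c 2), inner_neg_left,
      inner_apply_apply_eq_zero_of_orthonormal hπ hc (by decide) (by decide) (by decide), neg_zero]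
  simp [cyclicProducts, Fin.forall_fin_two, h₀₁, h₀₂, h₁₂,
    norm_apply_eq_one_of_orthonormal hπ hc]

theorem inner_cyclicProductMap_cyclicProductMap (hπalt : π.IsAlt)
    {c : Fin 3 → V} (hc : Orthonormal ℝ c) {x y : V}
    (hx : x ∈ Submodule.span ℝ (Set.range c)) (hy : y ∈ Submodule.span ℝ (Set.range c)) :
    ⟪cyclicProductMap π c x, cyclicProductMap π c y⟫ = ⟪x, y⟫ := by
  rw [cyclicProductMap_apply, cyclicProductMap_apply,
    (orthonormal_cyclicProducts hπ hπalt hc).inner_sum, hc.inner_eq_sum_mul_of_mem_span hx hy]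
  simp [real_inner_comm]

end

variable {S : Submodule ℝ V} {c : Fin 3 → V}

theorem isProductOnOrientedFrames_cyclicProductMap (hπalt : π.IsAlt) (hc : Orthonormal ℝ c)
    (hcspan : Submodule.span ℝ (Set.range c) = S) :
    IsProductOnOrientedFrames π S c ((cyclicProductMap π c).domRestrict S) := by
  intro e f w he hf hw hefw hdet
  subst hcspan
  set p : V → Fin 3 → ℝ := fun x j => ⟪c j, x⟫
  have hdot : ∀ {x y}, x ∈ Submodule.span ℝ (Set.range c) → y ∈ Submodule.span ℝ (Set.range c) →
      p x ⬝ᵥ p y = ⟪x, y⟫ := fun hx hy => by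
    simp [hc.inner_eq_sum_mul_of_mem_span hx hy, p, dotProduct, real_inner_comm]
  have hunit : ∀ i, ⟪![e, f, w] i, ![e, f, w] i⟫ = 1 := fun i => by
    rw [real_inner_self_eq_norm_sq, hefw.norm_eq_one, one_pow]
  have hframe : Matrix.of (fun i j => ⟪c j, ![e, f, w] i⟫) = ![p e, p f, p w] := by
    ext i j; fin_cases i <;> rfl
  have hcoord : p w = p e ⨯₃ p f :=
    eq_cross_of_det_eq_one ((hdot he he).trans (hunit 0))
      ((hdot hf hf).trans (hunit 1)) ((hdot hw hw).trans (hunit 2))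
      ((hdot he hf).trans (hefw.inner_eq_zero (by decide : (0 : Fin 3) ≠ 1)))
      (hframe ▸ hdet)
  calc (cyclicProductMap π c).domRestrict _ ⟨w, hw⟩ = ∑ k, p w k • cyclicProducts π c k := rfl
    _ = π (∑ i, p e i • c i) (∑ j, p f j • c j) := by
      rw [hcoord, hπalt.apply_sum_smul_sum_smul]
    _ = π e f := by
      rw [hc.sum_inner_smul_eq_of_mem_span he, hc.sum_inner_smul_eq_of_mem_span hf]

theorem IsProductOnOrientedFrames.unique {m m' : S →ₗ[ℝ] V}
    (hm : IsProductOnOrientedFrames π S c m) (hm' : IsProductOnOrientedFrames π S c m')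
    (hc : Orthonormal ℝ c) (hcspan : Submodule.span ℝ (Set.range c) = S) : m = m' := by
  subst hcspan
  have hcS : ∀ i, c i ∈ Submodule.span ℝ (Set.range c) := fun i => Submodule.subset_span ⟨i, rfl⟩
  have hcc := orthonormal_iff_ite.mp hc
  have hbasis : ∀ {n : _ →ₗ[ℝ] V}, IsProductOnOrientedFrames π _ c n →
      ∀ k, n ⟨c k, hcS k⟩ = cyclicProducts π c k := by
    intro n hn k
    fin_cases k <;> refine hn _ _ _ (hcS _) (hcS _) (hcS _) ?_ ?_ <;>
      simp [orthonormal_iff_ite, Fin.forall_fin_succ, hcc, hc.norm_eq_one, Matrix.det_fin_three]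
  ext ⟨x, hx⟩
  have hxsum : (⟨x, hx⟩ : Submodule.span ℝ (Set.range c)) = ∑ i, ⟪c i, x⟫ • ⟨c i, hcS i⟩ :=
    Subtype.ext (by simpa using (hc.sum_inner_smul_eq_of_mem_span hx).symm)
  simp only [hxsum, map_sum, map_smul, hbasis hm, hbasis hm']

end VectorProduct

theorem stmt2_general
    {V : Type*} [NormedAddCommGroup V] [InnerProductSpace ℝ V]
    (π : V →ₗ[ℝ] V →ₗ[ℝ] V) (hπalt : ∀ x : V, π x x = 0)
    (hπvp : ∀ u v : V, Orthonormal ℝ ![u, v] → Orthonormal ℝ ![u, v, π u v])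
    (S : Submodule ℝ V)
    (c : Fin 3 → V) (hc : Orthonormal ℝ c)
    (hcspan : Submodule.span ℝ (Set.range c) = S) :
    (∃! m : S →ₗ[ℝ] V,
      ∀ (e f w : V) (_ : e ∈ S) (_ : f ∈ S) (hw : w ∈ S),
        Orthonormal ℝ ![e, f, w] →
        Matrix.det (Matrix.of fun i j => ⟪c j, ![e, f, w] i⟫) = 1 →
        m ⟨w, hw⟩ = π e f) ∧
    ∀ m : S →ₗ[ℝ] V,
      (∀ (e f w : V) (_ : e ∈ S) (_ : f ∈ S) (hw : w ∈ S),
        Orthonormal ℝ ![e, f, w] →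
        Matrix.det (Matrix.of fun i j => ⟪c j, ![e, f, w] i⟫) = 1 →
        m ⟨w, hw⟩ = π e f) →
      ∀ x y : S, ⟪m x, m y⟫ = ⟪(x : V), (y : V)⟫ := by
  have hm₀ : IsProductOnOrientedFrames π S c _ :=
    isProductOnOrientedFrames_cyclicProductMap hπalt hc hcspan
  refine ⟨⟨_, hm₀, fun m hm => IsProductOnOrientedFrames.unique hm hm₀ hc hcspan⟩,
    fun m hm x y => ?_⟩
  rw [IsProductOnOrientedFrames.unique hm hm₀ hc hcspan]
  exact inner_cyclicProductMap_cyclicProductMap hπvp hπalt hc (hcspan ▸ x.2) (hcspan ▸ y.2)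

theorem stmt2
    {V : Type*} [NormedAddCommGroup V] [InnerProductSpace ℝ V]
    [FiniteDimensional ℝ V] (hdim : Module.finrank ℝ V = 7)
    (π : V →ₗ[ℝ] V →ₗ[ℝ] V) (hπalt : ∀ x : V, π x x = 0)
    (hπvp : ∀ u v : V, Orthonormal ℝ ![u, v] → Orthonormal ℝ ![u, v, π u v])
    (S : Submodule ℝ V) (hS : Module.finrank ℝ S = 3)
    (c : Fin 3 → V) (hcS : ∀ i, c i ∈ S) (hc : Orthonormal ℝ c)
    (hcspan : Submodule.span ℝ (Set.range c) = S) :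
    (∃! m : S →ₗ[ℝ] V,
      ∀ (e f w : V) (_ : e ∈ S) (_ : f ∈ S) (hw : w ∈ S),
        Orthonormal ℝ ![e, f, w] →
        Matrix.det (Matrix.of fun i j => ⟪c j, ![e, f, w] i⟫) = 1 →
        m ⟨w, hw⟩ = π e f) ∧
    ∀ m : S →ₗ[ℝ] V,
      (∀ (e f w : V) (_ : e ∈ S) (_ : f ∈ S) (hw : w ∈ S),
        Orthonormal ℝ ![e, f, w] →
        Matrix.det (Matrix.of fun i j => ⟪c j, ![e, f, w] i⟫) = 1 →
        m ⟨w, hw⟩ = π e f) →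
      ∀ x y : S, ⟪m x, m y⟫ = ⟪(x : V), (y : V)⟫ :=
  stmt2_general π hπalt hπvp S c hc hcspan
end

section
/- Let S ⊆ V be a 3-dimensional subspace and let P_S denote the orthogonal projection of V onto S. If (e, f, w) and (e', f', w') are two orthonormal bases of S, then ‖P_S(π(e, f))‖ = ‖P_S(π(e', f'))‖, and likewise ‖P_{S^⊥}(π(e, f))‖ = ‖P_{S^⊥}(π(e', f'))‖, where P_{S^⊥} is the orthogonal projection onto the orthogonal complement of S. -/
open scoped RealInnerProductSpace

/-!
The form `φ(x, y, z) = ⟪xy, z⟫` is alternating: `⟪xy, y⟫ = 0` holds for all `x, y`, not only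
orthonormal ones, after removing from `x` its component along `y`. On the 3-dimensional space `S`
it is therefore a multiple of the determinant, and since the change of basis between two
orthonormal bases has determinant `±1`, `|φ(e, f, w)|` does not depend on the orthonormal basis.
As `ef ⊥ e, f`, the projection of `ef` onto `S` is `φ(e, f, w) w`, which gives the first equality;
the second follows from Pythagoras because `‖ef‖ = 1`.
-/

namespace Submodule

variable {V : Type*} [NormedAddCommGroup V] [InnerProductSpace ℝ V]

theorem exists_orthonormalBasis_coe_eq {ι : Type*} [Fintype ι] (S : Submodule ℝ V)
    [FiniteDimensional ℝ S] {v : ι → V} (hv : Orthonormal ℝ v) (hvS : ∀ i, v i ∈ S)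
    (hS : Module.finrank ℝ S = Fintype.card ι) :
    ∃ b : OrthonormalBasis ι ℝ S, ∀ i, (b i : V) = v i := by
  have hv' := hv.codRestrict S hvS
  exact ⟨.mk hv' (hv'.linearIndependent.span_eq_top_of_card_eq_finrank' hS.symm).ge,
    fun i => by simp⟩

theorem norm_sq_orthogonalProjectionOnto_eq_sum {ι : Type*} [Fintype ι] (S : Submodule ℝ V)
    [S.HasOrthogonalProjection] (b : OrthonormalBasis ι ℝ S) (x : V) :
    ‖S.orthogonalProjectionOnto x‖ ^ 2 = ∑ i, ⟪(b i : V), x⟫ ^ 2 := by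
  rw [← b.sum_sq_inner_right]
  simp only [inner_orthogonalProjectionOnto_eq_of_mem_left]

theorem norm_orthogonalProjectionOnto_orthogonal_eq (S : Submodule ℝ V) [S.HasOrthogonalProjection]
    {x y : V} (hxy : ‖x‖ = ‖y‖)
    (hS : ‖S.orthogonalProjectionOnto x‖ = ‖S.orthogonalProjectionOnto y‖) :
    ‖Sᗮ.orthogonalProjectionOnto x‖ = ‖Sᗮ.orthogonalProjectionOnto y‖ := by
  have hx := norm_sq_eq_add_norm_sq_projection x S
  have hy := norm_sq_eq_add_norm_sq_projection y S
  rw [hxy, hS] at hx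
  rw [← sq_eq_sq₀ (norm_nonneg _) (norm_nonneg _)]
  linarith

end Submodule

namespace AlternatingMap

variable {ι V : Type*} [Fintype ι] [DecidableEq ι] [NormedAddCommGroup V]
  [InnerProductSpace ℝ V]

theorem abs_apply_orthonormalBasis_eq (Φ : V [⋀^ι]→ₗ[ℝ] ℝ) (b b' : OrthonormalBasis ι ℝ V) :
    |Φ b| = |Φ b'| := by
  conv_rhs => rw [Φ.eq_smul_basis_det b.toBasis]
  rw [smul_apply, smul_eq_mul, abs_mul, ← Real.norm_eq_abs (b.toBasis.det b'),
    b.det_to_matrix_orthonormalBasis, mul_one, OrthonormalBasis.coe_toBasis]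

theorem abs_apply_eq_of_orthonormal (Φ : V [⋀^ι]→ₗ[ℝ] ℝ) (S : Submodule ℝ V)
    [FiniteDimensional ℝ S] (hS : Module.finrank ℝ S = Fintype.card ι) {v v' : ι → V}
    (hv : Orthonormal ℝ v) (hvS : ∀ i, v i ∈ S) (hv' : Orthonormal ℝ v') (hvS' : ∀ i, v' i ∈ S) :
    |Φ v| = |Φ v'| := by
  obtain ⟨b, hb⟩ := S.exists_orthonormalBasis_coe_eq hv hvS hS
  obtain ⟨b', hb'⟩ := S.exists_orthonormalBasis_coe_eq hv' hvS' hS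
  obtain rfl : v = fun i => (b i : V) := funext fun i => (hb i).symm
  obtain rfl : v' = fun i => (b' i : V) := funext fun i => (hb' i).symm
  exact (Φ.compLinearMap S.subtype).abs_apply_orthonormalBasis_eq b b'

end AlternatingMap

namespace VectorProduct

variable {V : Type*} [NormedAddCommGroup V] [InnerProductSpace ℝ V] {π : V →ₗ[ℝ] V →ₗ[ℝ] V}

theorem inner_apply_right_eq_zero_of_inner_eq_zero
    (hπ : ∀ u v : V, Orthonormal ℝ ![u, v] → Orthonormal ℝ ![u, v, π u v])
    {x y : V} (hxy : ⟪x, y⟫ = 0) : ⟪π x y, y⟫ = 0 := by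
  rcases eq_or_ne x 0 with rfl | hx
  · simp
  rcases eq_or_ne y 0 with rfl | hy
  · simp
  have hx' : ‖x‖⁻¹ ≠ 0 := inv_ne_zero (norm_ne_zero_iff.2 hx)
  have hy' : ‖y‖⁻¹ ≠ 0 := inv_ne_zero (norm_ne_zero_iff.2 hy)
  have hon : Orthonormal ℝ ![‖x‖⁻¹ • x, ‖y‖⁻¹ • y] := by
    simp [norm_smul, hx, hy, real_inner_smul_left, real_inner_smul_right, hxy]
  have h := ((orthonormal_vecCons_iff.1 (hπ _ _ hon)).2.2.inner_eq_zero
    (show (0 : Fin 2) ≠ 1 by decide))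
  simpa [real_inner_smul_left, real_inner_smul_right, real_inner_comm y, hx', hy'] using h

theorem inner_apply_right_self (hπalt : ∀ x : V, π x x = 0)
    (hπ : ∀ u v : V, Orthonormal ℝ ![u, v] → Orthonormal ℝ ![u, v, π u v]) (x y : V) :
    ⟪π x y, y⟫ = 0 := by
  rcases eq_or_ne y 0 with rfl | hy
  · simp
  set c := ⟪y, x⟫ / ⟪y, y⟫
  have hperp : ⟪x - c • y, y⟫ = 0 := by
    rw [inner_sub_left, real_inner_smul_left, real_inner_comm y x,
      div_mul_cancel₀ _ (inner_self_ne_zero.2 hy), sub_self]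
  have hsplit : π x y = π (x - c • y) y := by simp [hπalt]
  rw [hsplit, inner_apply_right_eq_zero_of_inner_eq_zero hπ hperp]

theorem inner_apply_left_self (hπalt : ∀ x : V, π x x = 0)
    (hπ : ∀ u v : V, Orthonormal ℝ ![u, v] → Orthonormal ℝ ![u, v, π u v]) (x y : V) :
    ⟪π x y, x⟫ = 0 := by
  rw [← LinearMap.IsAlt.neg hπalt y x, inner_neg_left, inner_apply_right_self hπalt hπ, neg_zero]

def associativeForm (hπalt : ∀ x : V, π x x = 0)
    (hπ : ∀ u v : V, Orthonormal ℝ ![u, v] → Orthonormal ℝ ![u, v, π u v]) :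
    V [⋀^Fin 3]→ₗ[ℝ] ℝ where
  toMultilinearMap := MultilinearMap.mk' (fun v => ⟪π (v 0) (v 1), v 2⟫)
    (fun v i x y => by fin_cases i <;> simp [inner_add_left, inner_add_right])
    (fun v i c x => by fin_cases i <;> simp [real_inner_smul_left, real_inner_smul_right])
  map_eq_zero_of_eq' v i j hij hne := by
    fin_cases i <;> fin_cases j <;>
      simp_all [inner_apply_left_self hπalt hπ, inner_apply_right_self hπalt hπ]

@[simp]
theorem associativeForm_apply (hπalt : ∀ x : V, π x x = 0)
    (hπ : ∀ u v : V, Orthonormal ℝ ![u, v] → Orthonormal ℝ ![u, v, π u v]) (v : Fin 3 → V) :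
    associativeForm hπalt hπ v = ⟪π (v 0) (v 1), v 2⟫ :=
  rfl

theorem norm_apply_of_orthonormal
    (hπ : ∀ u v : V, Orthonormal ℝ ![u, v] → Orthonormal ℝ ![u, v, π u v])
    {e f : V} (hef : Orthonormal ℝ ![e, f]) : ‖π e f‖ = 1 := by
  simpa using (hπ e f hef).norm_eq_one 2

theorem norm_orthogonalProjectionOnto_apply (hπalt : ∀ x : V, π x x = 0)
    (hπ : ∀ u v : V, Orthonormal ℝ ![u, v] → Orthonormal ℝ ![u, v, π u v])
    (S : Submodule ℝ V) [FiniteDimensional ℝ S] (hS : Module.finrank ℝ S = 3) {e f w : V}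
    (hb : Orthonormal ℝ ![e, f, w]) (he : e ∈ S) (hf : f ∈ S) (hw : w ∈ S) :
    ‖S.orthogonalProjectionOnto (π e f)‖ = |⟪π e f, w⟫| := by
  obtain ⟨b, hbv⟩ := S.exists_orthonormalBasis_coe_eq hb
    (by simp [Fin.forall_fin_succ, he, hf, hw]) (by rw [hS, Fintype.card_fin])
  rw [← sq_eq_sq₀ (norm_nonneg _) (abs_nonneg _), sq_abs,
    S.norm_sq_orthogonalProjectionOnto_eq_sum b, Fin.sum_univ_three, hbv, hbv, hbv]
  simp [real_inner_comm (π e f), inner_apply_left_self hπalt hπ,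
    inner_apply_right_self hπalt hπ]

end VectorProduct

theorem stmt3_general
    {V : Type*} [NormedAddCommGroup V] [InnerProductSpace ℝ V]
    [FiniteDimensional ℝ V]
    (π : V →ₗ[ℝ] V →ₗ[ℝ] V) (hπalt : ∀ x : V, π x x = 0)
    (hπvp : ∀ u v : V, Orthonormal ℝ ![u, v] → Orthonormal ℝ ![u, v, π u v])
    (S : Submodule ℝ V) (hS : Module.finrank ℝ S = 3)
    (e f w e' f' w' : V)
    (heS : e ∈ S) (hfS : f ∈ S) (hwS : w ∈ S)
    (heS' : e' ∈ S) (hfS' : f' ∈ S) (hwS' : w' ∈ S)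
    (hb : Orthonormal ℝ ![e, f, w]) (hb' : Orthonormal ℝ ![e', f', w']) :
    ‖S.orthogonalProjection (π e f)‖ = ‖S.orthogonalProjection (π e' f')‖ ∧
    ‖Sᗮ.orthogonalProjection (π e f)‖ = ‖Sᗮ.orthogonalProjection (π e' f')‖ := by
  have hmem : ∀ {a b c : V}, a ∈ S → b ∈ S → c ∈ S → ∀ i, ![a, b, c] i ∈ S := by
    intro a b c ha hb hc
    simp [Fin.forall_fin_succ, ha, hb, hc]
  have hproj : ‖S.orthogonalProjectionOnto (π e f)‖ = ‖S.orthogonalProjectionOnto (π e' f')‖ := by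
    rw [VectorProduct.norm_orthogonalProjectionOnto_apply hπalt hπvp S hS hb heS hfS hwS,
      VectorProduct.norm_orthogonalProjectionOnto_apply hπalt hπvp S hS hb' heS' hfS' hwS']
    simpa using (VectorProduct.associativeForm hπalt hπvp).abs_apply_eq_of_orthonormal S
      (by rw [hS, Fintype.card_fin]) hb (hmem heS hfS hwS) hb' (hmem heS' hfS' hwS')
  have hpair : ∀ {a b c : V}, Orthonormal ℝ ![a, b, c] → Orthonormal ℝ ![a, b] := fun h => by
    simp only [orthonormal_vecCons_iff] at h ⊢
    simp_all
  have hunit : ‖π e f‖ = ‖π e' f'‖ := by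
    rw [VectorProduct.norm_apply_of_orthonormal hπvp (hpair hb),
      VectorProduct.norm_apply_of_orthonormal hπvp (hpair hb')]
  exact ⟨hproj, S.norm_orthogonalProjectionOnto_orthogonal_eq hunit hproj⟩

theorem stmt3
    {V : Type*} [NormedAddCommGroup V] [InnerProductSpace ℝ V]
    [FiniteDimensional ℝ V] (hdim : Module.finrank ℝ V = 7)
    (π : V →ₗ[ℝ] V →ₗ[ℝ] V) (hπalt : ∀ x : V, π x x = 0)
    (hπvp : ∀ u v : V, Orthonormal ℝ ![u, v] → Orthonormal ℝ ![u, v, π u v])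
    (S : Submodule ℝ V) (hS : Module.finrank ℝ S = 3)
    (e f w e' f' w' : V)
    (heS : e ∈ S) (hfS : f ∈ S) (hwS : w ∈ S)
    (heS' : e' ∈ S) (hfS' : f' ∈ S) (hwS' : w' ∈ S)
    (hb : Orthonormal ℝ ![e, f, w]) (hb' : Orthonormal ℝ ![e', f', w']) :
    ‖S.orthogonalProjection (π e f)‖ = ‖S.orthogonalProjection (π e' f')‖ ∧
    ‖Sᗮ.orthogonalProjection (π e f)‖ = ‖Sᗮ.orthogonalProjection (π e' f')‖ :=
  stmt3_general π hπalt hπvp S hS e f w e' f' w' heS hfS hwS heS' hfS' hwS' hb hb'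
end

section
/- Let λ ≠ μ be real numbers and let δ be a self-adjoint endomorphism of V whose eigenspace for λ has dimension 1 and whose eigenspace for μ has dimension 6. Then there exists a Cayley triple (u, v, z) such that δ(u) = λ•u and δ(x) = μ•x for each x ∈ {v, uv, z, uz, vz, (uv)z}. -/
/-!
The `μ`-eigenspace of `δ` is orthogonal to the line spanned by a unit `λ`-eigenvector `u`, and
by dimension count it is all of `uᗮ`; so it suffices to find a Cayley triple `(u, v, z)` starting
with `u` and to check that `u` is orthogonal to `uz`, `vz` and `(uv)z`. These follow from the
trilinear form `⟪a, bc⟫` being alternating and from `b ↦ ub` being an isometry of `uᗮ`.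
-/

open scoped RealInnerProductSpace
open Module Module.End

section

variable {𝕜 E : Type*} [RCLike 𝕜] [NormedAddCommGroup E] [InnerProductSpace 𝕜 E]

lemma Submodule.exists_norm_eq_one_eq_span_singleton {K : Submodule 𝕜 E}
    (hK : finrank 𝕜 K = 1) : ∃ u : E, ‖u‖ = 1 ∧ K = 𝕜 ∙ u := by
  have : FiniteDimensional 𝕜 K := Module.finite_of_finrank_eq_succ hK
  obtain ⟨u, huK, hu⟩ := Submodule.exists_mem_ne_zero_of_ne_bot (p := K) (by
    rintro rfl
    simp at hK)
  have hu' : (‖u‖⁻¹ : 𝕜) • u ≠ 0 := smul_ne_zero (by simpa using hu) hu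
  refine ⟨(‖u‖⁻¹ : 𝕜) • u, norm_smul_inv_norm hu, (Submodule.eq_of_le_of_finrank_eq ?_ ?_).symm⟩
  · exact (Submodule.span_singleton_le_iff_mem _ _).mpr (K.smul_mem _ huK)
  · rw [finrank_span_singleton hu', hK]

lemma exists_norm_eq_one_forall_inner_eq_zero [FiniteDimensional 𝕜 E] {n : ℕ} (f : Fin n → E)
    (hn : n < finrank 𝕜 E) : ∃ z : E, ‖z‖ = 1 ∧ ∀ i, inner 𝕜 (f i) z = 0 := by
  set W := Submodule.span 𝕜 (Set.range f)
  have hW : finrank 𝕜 W ≤ n := by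
    simpa [Set.finrank] using finrank_range_le_card (R := 𝕜) f
  have hWperp : Wᗮ ≠ ⊥ := by
    intro h
    have := W.finrank_add_finrank_orthogonal
    rw [h, finrank_bot] at this
    omega
  obtain ⟨z, hzW, hz⟩ := Submodule.exists_mem_ne_zero_of_ne_bot hWperp
  refine ⟨(‖z‖⁻¹ : 𝕜) • z, norm_smul_inv_norm hz, fun i => ?_⟩
  rw [inner_smul_right, (Submodule.mem_orthogonal W z).mp hzW _
    (Submodule.subset_span ⟨i, rfl⟩), mul_zero]

lemma Orthonormal.snoc {n : ℕ} {f : Fin n → E} (hf : Orthonormal 𝕜 f) {z : E} (hz : ‖z‖ = 1)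
    (hfz : ∀ i, inner 𝕜 (f i) z = 0) : Orthonormal 𝕜 (Fin.snoc f z : Fin (n + 1) → E) := by
  refine ⟨Fin.lastCases (by simpa using hz) (fun i => by simpa using hf.1 i), ?_⟩
  intro i j hij
  induction i using Fin.lastCases <;> induction j using Fin.lastCases
  · exact absurd rfl hij
  · simpa [inner_eq_zero_symm] using hfz _
  · simpa using hfz _
  · simpa using hf.2 (fun h => hij (congrArg _ h))

lemma Orthonormal.exists_orthonormal_snoc [FiniteDimensional 𝕜 E] {n : ℕ} {f : Fin n → E}
    (hf : Orthonormal 𝕜 f) (hn : n < finrank 𝕜 E) :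
    ∃ z : E, Orthonormal 𝕜 (Fin.snoc f z : Fin (n + 1) → E) :=
  let ⟨z, hz, hfz⟩ := exists_norm_eq_one_forall_inner_eq_zero f hn
  ⟨z, hf.snoc hz hfz⟩

lemma LinearMap.IsSymmetric.eigenspace_eq_orthogonal [FiniteDimensional 𝕜 E] {δ : E →ₗ[𝕜] E}
    (hδ : δ.IsSymmetric) {a b : 𝕜} (hab : a ≠ b)
    (hdim : finrank 𝕜 (eigenspace δ a) + finrank 𝕜 (eigenspace δ b) = finrank 𝕜 E) :
    eigenspace δ b = (eigenspace δ a)ᗮ := by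
  refine Submodule.eq_of_le_of_finrank_eq
    (Submodule.isOrtho_iff_le.mp (hδ.orthogonalFamily_eigenspaces.isOrtho hab.symm)) ?_
  have := (eigenspace δ a).finrank_add_finrank_orthogonal
  omega

end
structure IsVectorProduct {V : Type*} [NormedAddCommGroup V] [InnerProductSpace ℝ V]
    (π : V →ₗ[ℝ] V →ₗ[ℝ] V) : Prop where
  apply_self : ∀ x, π x x = 0
  orthonormal : ∀ u v, Orthonormal ℝ ![u, v] → Orthonormal ℝ ![u, v, π u v]

namespace IsVectorProduct

variable {V : Type*} [NormedAddCommGroup V] [InnerProductSpace ℝ V] {π : V →ₗ[ℝ] V →ₗ[ℝ] V}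
  (hπ : IsVectorProduct π)
include hπ

lemma antisymm (u v : V) : π u v = -π v u := by
  have h := hπ.apply_self (u + v)
  simp only [map_add, LinearMap.add_apply, hπ.apply_self, zero_add, add_zero] at h
  exact eq_neg_of_add_eq_zero_right h

lemma orthonormal_normalize {u v : V} (hu : u ≠ 0) (hv : v ≠ 0) (huv : ⟪u, v⟫ = 0) :
    Orthonormal ℝ ![‖u‖⁻¹ • u, ‖v‖⁻¹ • v, (‖u‖⁻¹ * ‖v‖⁻¹) • π u v] := by
  have hpair : Orthonormal ℝ ![‖u‖⁻¹ • u, ‖v‖⁻¹ • v] := by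
    simp [orthonormal_vecCons_iff, inner_smul_left, inner_smul_right, huv, norm_smul, hu, hv]
  simpa [smul_smul, mul_comm] using hπ.orthonormal _ _ hpair

lemma inner_apply_self_of_inner_eq_zero {u v : V} (huv : ⟪u, v⟫ = 0) : ⟪u, π u v⟫ = 0 := by
  rcases eq_or_ne u 0 with rfl | hu
  · simp
  rcases eq_or_ne v 0 with rfl | hv
  · simp
  have h := (hπ.orthonormal_normalize hu hv huv).inner_eq_zero (show (0 : Fin 3) ≠ 2 by decide)
  simpa [inner_smul_left, inner_smul_right, hu, hv] using h

lemma inner_apply_self (u v : V) : ⟪u, π u v⟫ = 0 := by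
  rcases eq_or_ne u 0 with rfl | hu
  · simp
  set w := v - (⟪u, v⟫ / ‖u‖ ^ 2) • u
  have huw : ⟪u, w⟫ = 0 := by
    simp [w, inner_sub_right, real_inner_smul_right, hu]
  have hvw : π u v = π u w := by simp [w, hπ.apply_self]
  rw [hvw, hπ.inner_apply_self_of_inner_eq_zero huw]

lemma inner_apply_swap (a b c : V) : ⟪a, π b c⟫ = -⟪b, π a c⟫ := by
  have h := hπ.inner_apply_self (a + b) c
  simp only [map_add, LinearMap.add_apply, inner_add_left, inner_add_right,
    hπ.inner_apply_self] at h
  linarith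

lemma inner_apply_cyclic (a b c : V) : ⟪a, π b c⟫ = ⟪c, π a b⟫ := by
  rw [hπ.inner_apply_swap, hπ.antisymm a, inner_neg_right, neg_neg, hπ.inner_apply_swap,
    hπ.antisymm b, inner_neg_right, neg_neg]

lemma norm_apply_of_inner_eq_zero {u v : V} (huv : ⟪u, v⟫ = 0) : ‖π u v‖ = ‖u‖ * ‖v‖ := by
  rcases eq_or_ne u 0 with rfl | hu
  · simp
  rcases eq_or_ne v 0 with rfl | hv
  · simp
  have h := (hπ.orthonormal_normalize hu hv huv).norm_eq_one 2
  simp only [Matrix.cons_val, norm_smul, norm_mul, norm_inv, norm_norm] at h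
  field_simp at h
  linarith

lemma inner_apply_apply {u v w : V} (hu : ‖u‖ = 1) (huv : ⟪u, v⟫ = 0) (huw : ⟪u, w⟫ = 0) :
    ⟪π u v, π u w⟫ = ⟪v, w⟫ := by
  have hvw : ⟪u, v + w⟫ = 0 := by rw [inner_add_right, huv, huw, add_zero]
  have h := hπ.norm_apply_of_inner_eq_zero hvw
  rw [map_add, hu, one_mul, ← sq_eq_sq₀ (norm_nonneg _) (norm_nonneg _), norm_add_sq_real,
    norm_add_sq_real, hπ.norm_apply_of_inner_eq_zero huv, hπ.norm_apply_of_inner_eq_zero huw,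
    hu, one_mul, one_mul] at h
  linarith

end IsVectorProduct

theorem stmt7
    {V : Type*} [NormedAddCommGroup V] [InnerProductSpace ℝ V]
    [FiniteDimensional ℝ V] (hdim : Module.finrank ℝ V = 7)
    (π : V →ₗ[ℝ] V →ₗ[ℝ] V) (hπalt : ∀ x : V, π x x = 0)
    (hπvp : ∀ u v : V, Orthonormal ℝ ![u, v] → Orthonormal ℝ ![u, v, π u v])
    (lam μ : ℝ) (hlm : lam ≠ μ)
    (δ : V →ₗ[ℝ] V) (hδ : LinearMap.IsSymmetric δ)
    (h1 : Module.finrank ℝ (Module.End.eigenspace δ lam) = 1)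
    (h6 : Module.finrank ℝ (Module.End.eigenspace δ μ) = 6) :
    ∃ u v z : V, Orthonormal ℝ ![u, v, π u v, z] ∧
      δ u = lam • u ∧ δ v = μ • v ∧ δ (π u v) = μ • π u v ∧ δ z = μ • z ∧
      δ (π u z) = μ • π u z ∧ δ (π v z) = μ • π v z ∧
      δ (π (π u v) z) = μ • π (π u v) z := by
  have hπ : IsVectorProduct π := ⟨hπalt, hπvp⟩
  obtain ⟨u, hu, hspan⟩ := Submodule.exists_norm_eq_one_eq_span_singleton h1
  have hδu : δ u = lam • u :=
    mem_eigenspace_iff.mp (hspan ▸ Submodule.mem_span_singleton_self u)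
  have hμ : ∀ x, ⟪u, x⟫ = 0 → δ x = μ • x := by
    intro x hx
    have hEμ := hδ.eigenspace_eq_orthogonal hlm (by rw [h1, h6, hdim])
    rw [hspan] at hEμ
    exact mem_eigenspace_iff.mp (hEμ ▸ Submodule.mem_orthogonal_singleton_iff_inner_right.mpr hx)
  obtain ⟨v, hpair⟩ := (show Orthonormal ℝ ![u] by simpa using hu).exists_orthonormal_snoc
    (by rw [hdim]; decide)
  simp only [Matrix.Fin.snoc_vecCons, Matrix.Fin.snoc_vecEmpty] at hpair
  obtain ⟨z, hz⟩ := (hπ.orthonormal u v hpair).exists_orthonormal_snoc (by rw [hdim]; decide)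
  simp only [Matrix.Fin.snoc_vecCons, Matrix.Fin.snoc_vecEmpty] at hz
  have huv : ⟪u, v⟫ = 0 := hz.inner_eq_zero (i := 0) (j := 1) (by decide)
  have huw : ⟪u, π u v⟫ = 0 := hz.inner_eq_zero (i := 0) (j := 2) (by decide)
  have huz : ⟪u, z⟫ = 0 := hz.inner_eq_zero (i := 0) (j := 3) (by decide)
  have hvz : ⟪v, z⟫ = 0 := hz.inner_eq_zero (i := 1) (j := 3) (by decide)
  have hwz : ⟪π u v, z⟫ = 0 := hz.inner_eq_zero (i := 2) (j := 3) (by decide)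
  refine ⟨u, v, z, hz, hδu, hμ v huv, hμ _ huw, hμ z huz, hμ _ (hπ.inner_apply_self u z),
    hμ _ ?_, hμ _ ?_⟩
  · rw [hπ.inner_apply_cyclic, real_inner_comm, hwz]
  · rw [hπ.inner_apply_swap, hπ.inner_apply_apply hu huv huz, hvz, neg_zero]
end

section
/- Let λ₁, λ₂, λ₃, μ be pairwise distinct real numbers and let δ be a self-adjoint endomorphism of V whose eigenspaces for λ₁, λ₂, λ₃, μ have dimensions 1, 1, 1, 4 respectively. Then there exists a unique α ∈ [0, π/2] for which some Cayley triple (u, v, z) satisfies: δ(u) = λ₁•u, δ(v) = λ₂•v, δ(x) = μ•x for each x ∈ {uz, vz, (uv)z}, δ(cos α • uv - sin α • z) = λ₃ • (cos α • uv - sin α • z), and δ(sin α • uv + cos α • z) = μ • (sin α • uv + cos α • z). -/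
/-!
The eigenspaces of `δ` are mutually orthogonal and their dimensions add up to `7`, so for unit
eigenvectors `u, v, w` of `λ₁, λ₂, λ₃` the `μ`-eigenspace is `W = {u, v, w}ᗮ`. Since `uv ⊥ u, v`,
we can write `uv = cos α • w + sin α • e` with `e ∈ W` a unit vector and `α = arccos ⟪uv, w⟫`,
which lies in `[0, π/2]` once the sign of `w` is chosen. Then `z = cos α • e - sin α • w` makes
`(u, v, z)` a Cayley triple, and `uz, vz, (uv)z` are orthogonal to `u, v, uv, z`, hence to `w`,
so they lie in `W`. Conversely, for any admissible `β` the vectors `u`, `v` and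
`cos β • uv - sin β • z` are `±` the chosen unit eigenvectors, so `cos β = |⟪uv, w⟫|`.
-/

open scoped RealInnerProductSpace

section

variable {V : Type*} [NormedAddCommGroup V] [InnerProductSpace ℝ V]

namespace Submodule

theorem mem_orthogonal_span_iff {s : Set V} {x : V} :
    x ∈ (span ℝ s)ᗮ ↔ ∀ y ∈ s, ⟪y, x⟫ = 0 := by
  rw [← span_singleton_le_iff_mem, ← isOrtho_iff_le, isOrtho_span]
  simp [real_inner_comm]

theorem exists_norm_eq_one {S : Submodule ℝ V} (hS : S ≠ ⊥) : ∃ e ∈ S, ‖e‖ = 1 := by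
  obtain ⟨b, hb, hb0⟩ := exists_mem_ne_zero_of_ne_bot hS
  exact ⟨‖b‖⁻¹ • b, S.smul_mem _ hb, norm_smul_inv_norm hb0⟩

theorem exists_norm_eq_one_and_eq_norm_smul {S : Submodule ℝ V} (hS : S ≠ ⊥) {m : V}
    (hm : m ∈ S) : ∃ e ∈ S, ‖e‖ = 1 ∧ m = ‖m‖ • e := by
  rcases eq_or_ne m 0 with rfl | hm0
  · obtain ⟨e, he, he1⟩ := exists_norm_eq_one hS
    exact ⟨e, he, he1, by simp⟩
  · refine ⟨‖m‖⁻¹ • m, S.smul_mem _ hm, norm_smul_inv_norm hm0, ?_⟩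
    rw [smul_smul, mul_inv_cancel₀ (norm_ne_zero_iff.2 hm0), one_smul]

theorem eq_or_eq_neg_of_finrank_eq_one {S : Submodule ℝ V} (hS : Module.finrank ℝ S = 1)
    {x y : V} (hx : x ∈ S) (hy : y ∈ S) (hx1 : ‖x‖ = 1) (hy1 : ‖y‖ = 1) : y = x ∨ y = -x := by
  have hx0 : x ≠ 0 := norm_ne_zero_iff.1 (by simp [hx1])
  rw [eq_span_singleton_of_mem_of_finrank_eq_one hS hx hx0, mem_span_singleton] at hy
  obtain ⟨c, rfl⟩ := hy
  rw [norm_smul, hx1, mul_one, Real.norm_eq_abs] at hy1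
  rcases abs_eq_abs.1 (hy1.trans abs_one.symm) with rfl | rfl <;> simp

end Submodule

structure IsVectorProduct_s10 (π : V →ₗ[ℝ] V →ₗ[ℝ] V) : Prop where
  apply_self : ∀ x, π x x = 0
  orthonormal : ∀ u v, Orthonormal ℝ ![u, v] → Orthonormal ℝ ![u, v, π u v]

def IsCayleyTriple (π : V →ₗ[ℝ] V →ₗ[ℝ] V) (u v z : V) : Prop :=
  Orthonormal ℝ ![u, v, π u v, z]

namespace IsVectorProduct_s10

variable {π : V →ₗ[ℝ] V →ₗ[ℝ] V} (hπ : IsVectorProduct_s10 π)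
include hπ

theorem apply_swap (x y : V) : π y x = -π x y := by
  have h := hπ.apply_self (x + y)
  simp only [map_add, LinearMap.add_apply, hπ.apply_self, zero_add, add_zero] at h
  exact eq_neg_of_add_eq_zero_left h

theorem inner_apply_left_and_right_and_norm {x y : V} (h : ⟪x, y⟫ = 0) :
    ⟪π x y, x⟫ = 0 ∧ ⟪π x y, y⟫ = 0 ∧ ‖π x y‖ = ‖x‖ * ‖y‖ := by
  rcases eq_or_ne x 0 with rfl | hx
  · simp
  rcases eq_or_ne y 0 with rfl | hy
  · simp
  set a := ‖x‖⁻¹ • x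
  set b := ‖y‖⁻¹ • y
  have hxa : x = ‖x‖ • a := by simp [a, smul_smul, hx]
  have hyb : y = ‖y‖ • b := by simp [b, smul_smul, hy]
  have ha : ‖a‖ = 1 := norm_smul_inv_norm hx
  have hb : ‖b‖ = 1 := norm_smul_inv_norm hy
  have hab := hπ.orthonormal a b <| by
    simp [orthonormal_vecCons_iff, ha, hb, a, b, real_inner_smul_left, real_inner_smul_right, h]
  simp [orthonormal_vecCons_iff] at hab
  rw [hxa, hyb]
  simp [real_inner_smul_left, real_inner_smul_right, norm_smul, hab, real_inner_comm, mul_comm]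

theorem inner_apply_left {x y : V} (h : ⟪x, y⟫ = 0) : ⟪π x y, x⟫ = 0 :=
  (hπ.inner_apply_left_and_right_and_norm h).1

theorem inner_apply_right {x y : V} (h : ⟪x, y⟫ = 0) : ⟪π x y, y⟫ = 0 :=
  (hπ.inner_apply_left_and_right_and_norm h).2.1

theorem norm_apply {x y : V} (h : ⟪x, y⟫ = 0) : ‖π x y‖ = ‖x‖ * ‖y‖ :=
  (hπ.inner_apply_left_and_right_and_norm h).2.2

theorem inner_apply_comm {x y z : V} (hy : ⟪x, y⟫ = 0) (hz : ⟪x, z⟫ = 0) :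
    ⟪π x y, z⟫ = -⟪π x z, y⟫ := by
  have h := hπ.inner_apply_right (y := y + z) (by rw [inner_add_right, hy, hz, add_zero])
  rw [map_add, inner_add_left, inner_add_right, inner_add_right, hπ.inner_apply_right hy,
    hπ.inner_apply_right hz] at h
  linarith

theorem inner_apply_apply_s10 {x y z : V} (hy : ⟪x, y⟫ = 0) (hz : ⟪x, z⟫ = 0) :
    ⟪π x y, π x z⟫ = ‖x‖ ^ 2 * ⟪y, z⟫ := by
  have h := hπ.norm_apply (y := y + z) (by rw [inner_add_right, hy, hz, add_zero])
  have h2 := congrArg (· ^ 2) h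
  simp only [map_add, mul_pow, norm_add_sq_real, hπ.norm_apply hy, hπ.norm_apply hz] at h2
  linarith

end IsVectorProduct_s10

namespace IsCayleyTriple

variable {π : V →ₗ[ℝ] V →ₗ[ℝ] V} {u v z : V}

theorem inner_apply_eq_zero (hπ : IsVectorProduct_s10 π) (h : IsCayleyTriple π u v z) :
    ∀ x ∈ ({u, v, π u v} : Set V), ∀ y ∈ ({u, v, π u v, z} : Set V), ⟪y, π x z⟫ = 0 := by
  simp [IsCayleyTriple, orthonormal_vecCons_iff, Fin.forall_fin_succ] at h
  obtain ⟨-, ⟨huv, huπ, huz⟩, -, ⟨hvπ, hvz⟩, -, hπz, -⟩ := h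
  have hvu : ⟪v, u⟫ = 0 := by rw [real_inner_comm, huv]
  have hπu : ⟪π u v, u⟫ = 0 := by rw [real_inner_comm, huπ]
  have hπv : ⟪π u v, v⟫ = 0 := by rw [real_inner_comm, hvπ]
  have h_uz : ⟪π u v, π u z⟫ = 0 := by rw [hπ.inner_apply_apply_s10 huv huz, hvz, mul_zero]
  have h_vz : ⟪π u v, π v z⟫ = 0 := by
    rw [hπ.apply_swap v u, inner_neg_left, hπ.inner_apply_apply_s10 hvu hvz, huz]
    simp
  simp only [Set.mem_insert_iff, Set.mem_singleton_iff, forall_eq_or_imp, forall_eq]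
  refine ⟨⟨?_, ?_, h_uz, ?_⟩, ⟨?_, ?_, h_vz, ?_⟩, ⟨?_, ?_, ?_, ?_⟩⟩ <;> rw [real_inner_comm]
  · exact hπ.inner_apply_left huz
  · rw [hπ.inner_apply_comm huz huv, hπz, neg_zero]
  · exact hπ.inner_apply_right huz
  · rw [hπ.inner_apply_comm hvz hvu, hπ.apply_swap u v, inner_neg_left, hπz, neg_zero, neg_zero]
  · exact hπ.inner_apply_left hvz
  · exact hπ.inner_apply_right hvz
  · rw [hπ.inner_apply_comm hπz hπu, hπ.apply_swap u, inner_neg_left, neg_neg,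
      hπ.inner_apply_comm huπ huz, real_inner_comm, h_uz, neg_zero]
  · rw [hπ.inner_apply_comm hπz hπv, hπ.apply_swap v, inner_neg_left, neg_neg,
      hπ.inner_apply_comm hvπ hvz, real_inner_comm, h_vz, neg_zero]
  · exact hπ.inner_apply_left hπz
  · exact hπ.inner_apply_right hπz

end IsCayleyTriple

open Submodule

namespace IsVectorProduct_s10

variable {π : V →ₗ[ℝ] V →ₗ[ℝ] V} (hπ : IsVectorProduct_s10 π) {u v w : V}
  (huvw : Orthonormal ℝ ![u, v, w])
include hπ huvw

theorem exists_apply_eq_cos_smul_add_sin_smul (hW : (span ℝ {u, v, w})ᗮ ≠ ⊥) :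
    ∃ e ∈ (span ℝ {u, v, w})ᗮ, ‖e‖ = 1 ∧
      π u v = Real.cos (Real.arccos ⟪π u v, w⟫) • w + Real.sin (Real.arccos ⟪π u v, w⟫) • e := by
  simp [orthonormal_vecCons_iff] at huvw
  obtain ⟨hu, ⟨huv, huw⟩, hv, hvw, hw⟩ := huvw
  set c := ⟪π u v, w⟫
  have hm : π u v - c • w ∈ (span ℝ {u, v, w})ᗮ := by
    simp only [mem_orthogonal_span_iff, Set.mem_insert_iff, Set.mem_singleton_iff,
      forall_eq_or_imp, forall_eq, inner_sub_right, real_inner_smul_right, huw, hvw,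
      real_inner_comm _ u, real_inner_comm _ v, hπ.inner_apply_left huv,
      hπ.inner_apply_right huv, real_inner_comm (π u v) w, real_inner_self_eq_norm_sq, hw]
    simp [c]
  obtain ⟨e, he, he1, hme⟩ := exists_norm_eq_one_and_eq_norm_smul hW hm
  set s := ‖π u v - c • w‖
  have hdecomp : π u v = c • w + s • e := by rw [← hme]; abel
  have hwe : ⟪w, e⟫ = 0 := inner_right_of_mem_orthogonal (subset_span (by simp)) he
  have hcs : c ^ 2 + s ^ 2 = 1 := by
    have h := congrArg (‖·‖ ^ 2) hdecomp
    simp only [hπ.norm_apply huv, hu, hv, norm_add_sq_real, norm_smul, real_inner_smul_left,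
      real_inner_smul_right, hwe, hw, he1, Real.norm_eq_abs, mul_pow, sq_abs] at h
    linarith
  have hcos : Real.cos (Real.arccos c) = c := Real.cos_arccos (by nlinarith) (by nlinarith)
  have hsin : Real.sin (Real.arccos c) = s := by
    rw [Real.sin_arccos, ← hcs, add_sub_cancel_left, Real.sqrt_sq (norm_nonneg _)]
  exact ⟨e, he, he1, by rw [hcos, hsin, hdecomp]⟩

variable {e : V} (he : e ∈ (span ℝ {u, v, w})ᗮ) (he1 : ‖e‖ = 1) {α : ℝ}
  (hdecomp : π u v = Real.cos α • w + Real.sin α • e)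
include he he1 hdecomp

theorem isCayleyTriple_cos_smul_sub_sin_smul :
    IsCayleyTriple π u v (Real.cos α • e - Real.sin α • w) := by
  simp [orthonormal_vecCons_iff] at huvw
  obtain ⟨hu, ⟨huv, huw⟩, hv, hvw, hw⟩ := huvw
  have hue : ⟪u, e⟫ = 0 := inner_right_of_mem_orthogonal (subset_span (by simp)) he
  have hve : ⟪v, e⟫ = 0 := inner_right_of_mem_orthogonal (subset_span (by simp)) he
  have hwe : ⟪w, e⟫ = 0 := inner_right_of_mem_orthogonal (subset_span (by simp)) he
  have hz1 : ‖Real.cos α • e - Real.sin α • w‖ = 1 := by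
    have h : ‖Real.cos α • e - Real.sin α • w‖ ^ 2 = 1 := by
      rw [norm_sub_sq_real]
      simp only [norm_smul, real_inner_smul_left, real_inner_smul_right, real_inner_comm w e, hwe,
        hw, he1, Real.norm_eq_abs, mul_pow, sq_abs]
      linarith [Real.cos_sq_add_sin_sq α]
    exact (pow_eq_one_iff_of_nonneg (norm_nonneg _) two_ne_zero).1 h
  have hπz : ⟪π u v, Real.cos α • e - Real.sin α • w⟫ = 0 := by
    simp only [hdecomp, inner_sub_right, inner_add_left, real_inner_smul_left,
      real_inner_smul_right, hwe, real_inner_comm w e, real_inner_self_eq_norm_sq, hw, he1]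
    ring
  have huz : ⟪u, Real.cos α • e - Real.sin α • w⟫ = 0 := by
    simp [inner_sub_right, real_inner_smul_right, hue, huw]
  have hvz : ⟪v, Real.cos α • e - Real.sin α • w⟫ = 0 := by
    simp [inner_sub_right, real_inner_smul_right, hve, hvw]
  have huπ : ⟪u, π u v⟫ = 0 := by rw [real_inner_comm]; exact hπ.inner_apply_left huv
  have hvπ : ⟪v, π u v⟫ = 0 := by rw [real_inner_comm]; exact hπ.inner_apply_right huv
  simp [IsCayleyTriple, orthonormal_vecCons_iff, Fin.forall_fin_succ, hu, hv, hπ.norm_apply huv,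
    hz1, huv, huπ, hvπ, huz, hvz, hπz]

theorem exists_isCayleyTriple :
    ∃ z, IsCayleyTriple π u v z ∧
      (∀ x ∈ ({u, v, π u v} : Set V), π x z ∈ (span ℝ {u, v, w})ᗮ) ∧
      Real.cos α • π u v - Real.sin α • z = w ∧ Real.sin α • π u v + Real.cos α • z = e := by
  have hcayley := hπ.isCayleyTriple_cos_smul_sub_sin_smul huvw he he1 hdecomp
  obtain ⟨z, hz⟩ : ∃ z, z = Real.cos α • e - Real.sin α • w := ⟨_, rfl⟩
  rw [← hz] at hcayley
  have hw_eq : Real.cos α • π u v - Real.sin α • z = w := by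
    rw [hz, hdecomp]; linear_combination (norm := module) Real.cos_sq_add_sin_sq α • w
  have he_eq : Real.sin α • π u v + Real.cos α • z = e := by
    rw [hz, hdecomp]; linear_combination (norm := module) Real.cos_sq_add_sin_sq α • e
  refine ⟨z, hcayley, fun x hx => ?_, hw_eq, he_eq⟩
  have h := hcayley.inner_apply_eq_zero hπ x hx
  simp only [Set.mem_insert_iff, Set.mem_singleton_iff, forall_eq_or_imp, forall_eq] at h
  simp only [mem_orthogonal_span_iff, Set.mem_insert_iff, Set.mem_singleton_iff,
    forall_eq_or_imp, forall_eq]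
  refine ⟨h.1, h.2.1, ?_⟩
  rw [← hw_eq, inner_sub_left, real_inner_smul_left, real_inner_smul_left, h.2.2.1, h.2.2.2]
  ring

end IsVectorProduct_s10

theorem IsCayleyTriple.cos_eq_abs_inner_apply {π : V →ₗ[ℝ] V →ₗ[ℝ] V} {E₁ E₂ E₃ : Submodule ℝ V}
    (h₁ : Module.finrank ℝ E₁ = 1) (h₂ : Module.finrank ℝ E₂ = 1)
    (h₃ : Module.finrank ℝ E₃ = 1) {e₁ e₂ e₃ : V}
    (he₁ : e₁ ∈ E₁) (he₂ : e₂ ∈ E₂) (he₃ : e₃ ∈ E₃) (he₁1 : ‖e₁‖ = 1) (he₂1 : ‖e₂‖ = 1)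
    (he₃1 : ‖e₃‖ = 1) {u v z : V} (h : IsCayleyTriple π u v z) (hu : u ∈ E₁) (hv : v ∈ E₂)
    {β : ℝ} (hβ : 0 ≤ Real.cos β) (hw : Real.cos β • π u v - Real.sin β • z ∈ E₃) :
    Real.cos β = |⟪π e₁ e₂, e₃⟫| := by
  simp [IsCayleyTriple, orthonormal_vecCons_iff, Fin.forall_fin_succ] at h
  obtain ⟨hu1, -, hv1, -, hπ1, hπz, hz1⟩ := h
  set w := Real.cos β • π u v - Real.sin β • z with hw_def
  have hw1 : ‖w‖ = 1 := by
    have h : ‖w‖ ^ 2 = 1 := by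
      rw [hw_def, norm_sub_sq_real]
      simp only [norm_smul, real_inner_smul_left, real_inner_smul_right, hπz, hπ1, hz1,
        Real.norm_eq_abs, mul_pow, sq_abs]
      linarith [Real.sin_sq_add_cos_sq β]
    exact (pow_eq_one_iff_of_nonneg (norm_nonneg w) two_ne_zero).1 h
  have hcos : ⟪π u v, w⟫ = Real.cos β := by
    simp [hw_def, inner_sub_right, real_inner_smul_right, hπ1, hπz]
  clear_value w
  rw [← abs_of_nonneg hβ, ← hcos]
  rcases Submodule.eq_or_eq_neg_of_finrank_eq_one h₁ he₁ hu he₁1 hu1 with rfl | rfl <;>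
    rcases Submodule.eq_or_eq_neg_of_finrank_eq_one h₂ he₂ hv he₂1 hv1 with rfl | rfl <;>
    rcases Submodule.eq_or_eq_neg_of_finrank_eq_one h₃ he₃ hw he₃1 hw1 with rfl | rfl <;>
    simp

namespace LinearMap.IsSymmetric

open Module Module.End

variable {δ : V →ₗ[ℝ] V} (hδ : δ.IsSymmetric)
include hδ

theorem inner_eq_zero_of_mem_eigenspace {a b : ℝ} (hab : a ≠ b) {x y : V}
    (hx : x ∈ eigenspace δ a) (hy : y ∈ eigenspace δ b) : ⟪x, y⟫ = 0 :=
  (hδ.orthogonalFamily_eigenspaces.pairwise hab).inner_eq hx hy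

theorem eigenspace_eq_orthogonal_span [FiniteDimensional ℝ V] {a b c μ : ℝ} (ha : a ≠ μ)
    (hb : b ≠ μ) (hc : c ≠ μ) {u v w : V} (hu : u ∈ eigenspace δ a) (hv : v ∈ eigenspace δ b)
    (hw : w ∈ eigenspace δ c) (huvw : Orthonormal ℝ ![u, v, w])
    (hdim : finrank ℝ (eigenspace δ μ) + 3 = finrank ℝ V) :
    eigenspace δ μ = (span ℝ {u, v, w})ᗮ := by
  refine eq_of_le_of_finrank_eq (fun x hx => ?_) ?_
  · simp [mem_orthogonal_span_iff, hδ.inner_eq_zero_of_mem_eigenspace ha hu hx,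
      hδ.inner_eq_zero_of_mem_eigenspace hb hv hx, hδ.inner_eq_zero_of_mem_eigenspace hc hw hx]
  · have h3 : finrank ℝ (span ℝ {u, v, w}) = 3 := by
      have h := finrank_span_eq_card huvw.linearIndependent
      rwa [Fintype.card_fin, show Set.range ![u, v, w] = {u, v, w} by
        simp [Set.insert_comm u, Set.pair_comm]] at h
    rw [finrank_add_finrank_orthogonal' (by rw [h3, add_comm, hdim])]

end LinearMap.IsSymmetric

end

open Module.End Submodule in
theorem stmt10
    {V : Type*} [NormedAddCommGroup V] [InnerProductSpace ℝ V]
    [FiniteDimensional ℝ V] (hdim : Module.finrank ℝ V = 7)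
    (π : V →ₗ[ℝ] V →ₗ[ℝ] V) (hπalt : ∀ x : V, π x x = 0)
    (hπvp : ∀ u v : V, Orthonormal ℝ ![u, v] → Orthonormal ℝ ![u, v, π u v])
    (l₁ l₂ l₃ μ : ℝ)
    (h12 : l₁ ≠ l₂) (h13 : l₁ ≠ l₃) (h1m : l₁ ≠ μ)
    (h23 : l₂ ≠ l₃) (h2m : l₂ ≠ μ) (h3m : l₃ ≠ μ)
    (δ : V →ₗ[ℝ] V) (hδ : LinearMap.IsSymmetric δ)
    (hd1 : Module.finrank ℝ (Module.End.eigenspace δ l₁) = 1)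
    (hd2 : Module.finrank ℝ (Module.End.eigenspace δ l₂) = 1)
    (hd3 : Module.finrank ℝ (Module.End.eigenspace δ l₃) = 1)
    (hdm : Module.finrank ℝ (Module.End.eigenspace δ μ) = 4) :
    ∃! α : ℝ, α ∈ Set.Icc (0 : ℝ) (Real.pi / 2) ∧ ∃ u v z : V,
      Orthonormal ℝ ![u, v, π u v, z] ∧
      δ u = l₁ • u ∧ δ v = l₂ • v ∧
      δ (π u z) = μ • π u z ∧ δ (π v z) = μ • π v z ∧
      δ (π (π u v) z) = μ • π (π u v) z ∧
      δ (Real.cos α • π u v - Real.sin α • z) =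
        l₃ • (Real.cos α • π u v - Real.sin α • z) ∧
      δ (Real.sin α • π u v + Real.cos α • z) =
        μ • (Real.sin α • π u v + Real.cos α • z) := by
  have hπ : IsVectorProduct_s10 π := ⟨hπalt, hπvp⟩
  obtain ⟨u, hu, hu1⟩ := exists_norm_eq_one (one_le_finrank_iff.1 hd1.ge)
  obtain ⟨v, hv, hv1⟩ := exists_norm_eq_one (one_le_finrank_iff.1 hd2.ge)
  obtain ⟨w, hw, hw1, hc⟩ : ∃ w ∈ eigenspace δ l₃, ‖w‖ = 1 ∧ 0 ≤ ⟪π u v, w⟫ := by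
    obtain ⟨w, hw, hw1⟩ := exists_norm_eq_one (one_le_finrank_iff.1 hd3.ge)
    rcases le_total 0 ⟪π u v, w⟫ with hc | hc
    · exact ⟨w, hw, hw1, hc⟩
    · exact ⟨-w, neg_mem hw, by rwa [norm_neg], by rwa [inner_neg_right, neg_nonneg]⟩
  have huvw : Orthonormal ℝ ![u, v, w] := by
    simp [orthonormal_vecCons_iff, hu1, hv1, hw1, hδ.inner_eq_zero_of_mem_eigenspace h12 hu hv,
      hδ.inner_eq_zero_of_mem_eigenspace h13 hu hw, hδ.inner_eq_zero_of_mem_eigenspace h23 hv hw]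
  have hEm := hδ.eigenspace_eq_orthogonal_span h1m h2m h3m hu hv hw huvw (by rw [hdm, hdim])
  obtain ⟨e, he, he1, hdecomp⟩ :=
    hπ.exists_apply_eq_cos_smul_add_sin_smul huvw (hEm ▸ one_le_finrank_iff.1 (by omega))
  obtain ⟨z, hz, hzW, hw_eq, he_eq⟩ := hπ.exists_isCayleyTriple huvw he he1 hdecomp
  simp only [← hEm, mem_eigenspace_iff] at hzW he
  refine ⟨Real.arccos ⟪π u v, w⟫, ⟨⟨Real.arccos_nonneg _, Real.arccos_le_pi_div_two.2 hc⟩, u, v, z,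
    hz, mem_eigenspace_iff.1 hu, mem_eigenspace_iff.1 hv, hzW u (by simp), hzW v (by simp),
    hzW _ (by simp), by rw [hw_eq]; exact mem_eigenspace_iff.1 hw, by rw [he_eq]; exact he⟩, ?_⟩
  rintro β ⟨⟨hβ0, hβ⟩, u', v', z', h', hu', hv', -, -, -, hw', -⟩
  have hcos := IsCayleyTriple.cos_eq_abs_inner_apply hd1 hd2 hd3 hu hv hw hu1 hv1 hw1 h'
    (mem_eigenspace_iff.2 hu') (mem_eigenspace_iff.2 hv')
    (Real.cos_nonneg_of_mem_Icc ⟨by linarith [Real.pi_pos], hβ⟩) (mem_eigenspace_iff.2 hw')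
  rw [abs_of_nonneg hc] at hcos
  rw [← hcos, Real.arccos_cos hβ0 (by linarith [Real.pi_pos])]
end

section
/- Let λ, μ, ν be pairwise distinct real numbers and let δ be a self-adjoint endomorphism of V whose eigenspaces for λ, μ, ν have dimensions 1, 2, 4 respectively. Then there exists a unique α ∈ [0, π/2] for which some Cayley triple (u, v, z) satisfies: δ(u) = μ•u, δ(v) = μ•v, δ(x) = ν•x for each x ∈ {uz, vz, (uv)z}, δ(cos α • uv - sin α • z) = λ • (cos α • uv - sin α • z), and δ(sin α • uv + cos α • z) = ν • (sin α • uv + cos α • z). -/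
/-!
Since the three eigenspaces are mutually orthogonal and their dimensions add up to 7,
`E_ν = E_λᗮ ⊓ E_μᗮ`. Fix an orthonormal basis `u, v` of `E_μ` and a unit vector `e` spanning
`E_λ`. For any admissible triple `(u', v', z')` we have `u'v' = ±uv` (both are unit multiples
of `uv`, as `u', v' ∈ span {u, v}`) and `cos α • u'v' - sin α • z' = ±e`, hence
`cos α = |⟪e, uv⟫|`; this gives uniqueness. For existence, choose the sign of `e` so that
`⟪e, uv⟫ ≥ 0`, put `α = arccos ⟪e, uv⟫` and take a unit `z ⊥ u, v, uv` with
`e = cos α • uv - sin α • z`. The identities `⟪xy, w⟫ = -⟪xw, y⟫` and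
`x(xy) = ⟪x, y⟫ x - ‖x‖² y` of a vector product show that `uz`, `vz`, `(uv)z` and
`sin α • uv + cos α • z` are orthogonal to `u`, `v` and `e`, hence lie in `E_ν`.
-/

open scoped RealInnerProductSpace

section

open Module Module.End Submodule Real

variable {V : Type*} [NormedAddCommGroup V] [InnerProductSpace ℝ V]

theorem LinearMap.IsSymmetric.eigenspace_eq_inf_orthogonal {𝕜 E : Type*} [RCLike 𝕜]
    [NormedAddCommGroup E] [InnerProductSpace 𝕜 E] [FiniteDimensional 𝕜 E] {T : E →ₗ[𝕜] E}
    (hT : T.IsSymmetric) {a b c : 𝕜} (hab : a ≠ b) (hac : a ≠ c) (hbc : b ≠ c)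
    (hdim : finrank 𝕜 (eigenspace T a) + finrank 𝕜 (eigenspace T b)
      + finrank 𝕜 (eigenspace T c) = finrank 𝕜 E) :
    eigenspace T c = (eigenspace T a)ᗮ ⊓ (eigenspace T b)ᗮ := by
  have hortho := hT.orthogonalFamily_eigenspaces
  refine eq_of_le_of_finrank_le
    (le_inf (hortho.isOrtho hac.symm).le (hortho.isOrtho hbc.symm).le) ?_
  have h₁ := finrank_add_inf_finrank_orthogonal (hortho.isOrtho hab.symm).le
  have h₂ := (eigenspace T a).finrank_add_finrank_orthogonal
  rw [inf_comm]
  omega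

theorem Submodule.mem_orthogonal_span_pair {u v w : V} :
    w ∈ (span ℝ {u, v})ᗮ ↔ ⟪u, w⟫ = 0 ∧ ⟪v, w⟫ = 0 := by
  rw [span_insert, ← inf_orthogonal, mem_inf, mem_orthogonal_singleton_iff_inner_right,
    mem_orthogonal_singleton_iff_inner_right]

theorem Submodule.exists_orthonormal_span_eq [FiniteDimensional ℝ V] {K : Submodule ℝ V} {n : ℕ}
    (hK : finrank ℝ K = n) : ∃ b : Fin n → V, Orthonormal ℝ b ∧ K = span ℝ (Set.range b) := by
  let b := (stdOrthonormalBasis ℝ K).reindex (finCongr hK)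
  refine ⟨fun i => b i, b.orthonormal.comp_linearIsometry K.subtypeₗᵢ, ?_⟩
  rw [show Set.range (fun i => (b i : V)) = K.subtype '' Set.range b from Set.range_comp _ _,
    span_image, ← b.coe_toBasis, b.toBasis.span_eq, map_subtype_top]

theorem Submodule.exists_orthonormal_span_pair_eq [FiniteDimensional ℝ V] {K : Submodule ℝ V}
    (hK : finrank ℝ K = 2) : ∃ u v : V, Orthonormal ℝ ![u, v] ∧ K = span ℝ {u, v} := by
  obtain ⟨b, hb, rfl⟩ := exists_orthonormal_span_eq hK
  have hb2 : ![b 0, b 1] = b := by ext i; fin_cases i <;> rfl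
  exact ⟨b 0, b 1, hb2 ▸ hb, by rw [← Matrix.range_cons_cons_empty _ _ ![], hb2]⟩

theorem Submodule.exists_norm_eq_one_span_singleton_eq [FiniteDimensional ℝ V]
    {K : Submodule ℝ V} (hK : finrank ℝ K = 1) (n : V) :
    ∃ e : V, ‖e‖ = 1 ∧ K = ℝ ∙ e ∧ 0 ≤ ⟪e, n⟫ := by
  obtain ⟨b, hb, rfl⟩ := exists_orthonormal_span_eq hK
  rw [Set.range_unique]
  rcases le_total 0 ⟪b default, n⟫ with h | h
  · exact ⟨b default, hb.1 _, rfl, h⟩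
  · refine ⟨-b default, by simp [hb.1 _], by rw [← Set.neg_singleton, span_neg], ?_⟩
    rw [inner_neg_left]
    linarith

theorem Submodule.exists_norm_eq_one_inner_eq_zero {K : Submodule ℝ V} (hK : 2 ≤ finrank ℝ K)
    {n : V} (hn : n ∈ K) : ∃ z ∈ K, ‖z‖ = 1 ∧ ⟪n, z⟫ = 0 := by
  have : FiniteDimensional ℝ K := Module.finite_of_finrank_pos (by omega)
  have h := finrank_add_inf_finrank_orthogonal ((span_singleton_le_iff_mem n K).mpr hn)
  have h1 : finrank ℝ (ℝ ∙ n) ≤ 1 := by simpa using finrank_span_le_card ({n} : Set V)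
  obtain ⟨x, hx, hx0⟩ := exists_mem_ne_zero_of_ne_bot (p := (ℝ ∙ n)ᗮ ⊓ K) fun hbot => by
    rw [hbot, finrank_bot] at h
    omega
  refine ⟨‖x‖⁻¹ • x, K.smul_mem _ hx.2, norm_smul_inv_norm hx0, ?_⟩
  rw [real_inner_smul_right, mem_orthogonal_singleton_iff_inner_right.mp hx.1, mul_zero]

theorem Submodule.exists_eq_cos_arccos_smul_sub_sin_arccos_smul {K : Submodule ℝ V}
    (hK : 2 ≤ finrank ℝ K) {e n : V} (heK : e ∈ K) (hnK : n ∈ K) (he : ‖e‖ = 1) (hn : ‖n‖ = 1) :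
    ∃ z ∈ K, ‖z‖ = 1 ∧ ⟪n, z⟫ = 0 ∧
      e = cos (arccos ⟪e, n⟫) • n - sin (arccos ⟪e, n⟫) • z := by
  set t := ⟪e, n⟫ with ht_def
  have ht : |t| ≤ 1 := by simpa [he, hn] using abs_real_inner_le_norm e n
  rw [cos_arccos (neg_le_of_abs_le ht) (le_of_abs_le ht), sin_arccos]
  have hs : ‖t • n - e‖ = √(1 - t ^ 2) := by
    rw [← sqrt_sq (norm_nonneg _), norm_sub_sq_real, norm_smul, real_inner_smul_left,
      real_inner_comm e n, ← ht_def, norm_eq_abs, mul_pow, sq_abs, hn, he]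
    congr 1
    ring
  set s := √(1 - t ^ 2)
  rcases eq_or_ne s 0 with hs0 | hs0
  -- here `e = t • n`, and any unit vector of `K` orthogonal to `n` will do
  · obtain ⟨z, hzK, hz, hnz⟩ := exists_norm_eq_one_inner_eq_zero hK hnK
    rw [hs0, norm_eq_zero, sub_eq_zero] at hs
    exact ⟨z, hzK, hz, hnz, by rw [hs0, zero_smul, sub_zero, hs]⟩
  refine ⟨s⁻¹ • (t • n - e), K.smul_mem _ (K.sub_mem (K.smul_mem _ hnK) heK), ?_, ?_, ?_⟩
  · rw [norm_smul, hs, norm_inv, norm_of_nonneg (sqrt_nonneg _), inv_mul_cancel₀ hs0]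
  · rw [real_inner_smul_right, inner_sub_right, real_inner_smul_right,
      real_inner_self_eq_norm_sq, hn, real_inner_comm]
    ring
  · rw [smul_smul, mul_inv_cancel₀ hs0, one_smul]
    abel

namespace LinearMap.IsAlt

variable {p : V →ₗ[ℝ] V →ₗ[ℝ] V} (hp : p.IsAlt)
include hp

theorem exists_inner_eq_zero_apply_eq (x y : V) :
    ∃ x', ⟪x', y⟫ = 0 ∧ p x' y = p x y ∧ ‖x'‖ ^ 2 * ‖y‖ ^ 2 = ‖x‖ ^ 2 * ‖y‖ ^ 2 - ⟪x, y⟫ ^ 2 := by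
  rcases eq_or_ne y 0 with rfl | hy
  · exact ⟨x, by simp⟩
  set c := ⟪x, y⟫ / ‖y‖ ^ 2
  have hc : c * ‖y‖ ^ 2 = ⟪x, y⟫ := div_mul_cancel₀ _ (by positivity)
  refine ⟨x - c • y, ?_, by simp [hp.self_eq_zero], ?_⟩
  · rw [inner_sub_left, real_inner_smul_left, real_inner_self_eq_norm_sq]
    linear_combination -hc
  · rw [norm_sub_sq_real, norm_smul, real_inner_smul_right, Real.norm_eq_abs, mul_pow, sq_abs]
    linear_combination (c * ‖y‖ ^ 2 - ⟪x, y⟫) * hc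

theorem apply_eq_smul_of_mem_span_pair {u v x y : V} (hx : x ∈ span ℝ {u, v})
    (hy : y ∈ span ℝ {u, v}) : ∃ D : ℝ, p x y = D • p u v := by
  obtain ⟨a, b, rfl⟩ := mem_span_pair.mp hx
  obtain ⟨c, d, rfl⟩ := mem_span_pair.mp hy
  refine ⟨a * d - b * c, ?_⟩
  simp only [map_add, map_smul, LinearMap.add_apply, LinearMap.smul_apply, hp.self_eq_zero,
    ← hp.neg u v]
  module

end LinearMap.IsAlt

structure IsVectorProduct_s11 (p : V →ₗ[ℝ] V →ₗ[ℝ] V) : Prop where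
  isAlt : p.IsAlt
  orthonormal : ∀ u v : V, Orthonormal ℝ ![u, v] → Orthonormal ℝ ![u, v, p u v]

namespace IsVectorProduct_s11

variable {p : V →ₗ[ℝ] V →ₗ[ℝ] V} (hp : IsVectorProduct_s11 p)
include hp

theorem inner_apply_eq_zero_and_norm_apply_of_inner_eq_zero {x y : V} (hxy : ⟪x, y⟫ = 0) :
    ⟪p x y, y⟫ = 0 ∧ ‖p x y‖ = ‖x‖ * ‖y‖ := by
  rcases eq_or_ne x 0 with rfl | hx
  · simp
  rcases eq_or_ne y 0 with rfl | hy
  · simp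
  have hx' : ‖x‖ ≠ 0 := norm_ne_zero_iff.mpr hx
  have hy' : ‖y‖ ≠ 0 := norm_ne_zero_iff.mpr hy
  set u := ‖x‖⁻¹ • x
  set w := ‖y‖⁻¹ • y
  have h := hp.orthonormal u w <| by
    simp [u, w, norm_smul, real_inner_smul_left, real_inner_smul_right, hxy, hx', hy']
  simp [Fin.forall_fin_succ] at h
  have hxu : x = ‖x‖ • u := by simp [u, smul_smul, hx']
  have hyw : y = ‖y‖ • w := by simp [w, smul_smul, hy']
  rw [hxu, hyw]
  simp [norm_smul, real_inner_smul_right, real_inner_comm w, h, mul_comm]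

theorem inner_apply_self_right (x y : V) : ⟪p x y, y⟫ = 0 := by
  obtain ⟨x', hx'y, hpx', -⟩ := hp.isAlt.exists_inner_eq_zero_apply_eq x y
  rw [← hpx']
  exact (hp.inner_apply_eq_zero_and_norm_apply_of_inner_eq_zero hx'y).1

theorem norm_apply_sq (x y : V) : ‖p x y‖ ^ 2 = ‖x‖ ^ 2 * ‖y‖ ^ 2 - ⟪x, y⟫ ^ 2 := by
  obtain ⟨x', hx'y, hpx', hx'⟩ := hp.isAlt.exists_inner_eq_zero_apply_eq x y
  rw [← hpx', (hp.inner_apply_eq_zero_and_norm_apply_of_inner_eq_zero hx'y).2, mul_pow, hx']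

theorem inner_apply_swap_s11 (x y w : V) : ⟪p x y, w⟫ = -⟪p x w, y⟫ := by
  have h := hp.inner_apply_self_right x (y + w)
  simp only [map_add, inner_add_left, inner_add_right, hp.inner_apply_self_right] at h
  linarith

theorem inner_apply_apply_s11 (x y w : V) :
    ⟪p x y, p x w⟫ = ‖x‖ ^ 2 * ⟪y, w⟫ - ⟪x, y⟫ * ⟪x, w⟫ := by
  have h := hp.norm_apply_sq x (y + w)
  rw [map_add, norm_add_sq_real, norm_add_sq_real, inner_add_right, hp.norm_apply_sq,
    hp.norm_apply_sq] at h
  linear_combination h / 2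

theorem apply_apply_self (x y : V) : p x (p x y) = ⟪x, y⟫ • x - ‖x‖ ^ 2 • y := by
  refine ext_inner_right ℝ fun w => ?_
  rw [hp.inner_apply_swap_s11, real_inner_comm, hp.inner_apply_apply_s11, inner_sub_left,
    real_inner_smul_left, real_inner_smul_left, real_inner_comm w y]
  ring

theorem inner_apply_eq_zero_of_cayley {u v z : V} (huv : Orthonormal ℝ ![u, v])
    (hzu : ⟪u, z⟫ = 0) (hzv : ⟪v, z⟫ = 0) (hzn : ⟪p u v, z⟫ = 0) {a b : V}
    (ha : a ∈ ({u, v, p u v} : Set V)) (hb : b ∈ ({u, v, p u v, z} : Set V)) :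
    ⟪b, p a z⟫ = 0 := by
  simp at huv
  obtain ⟨hu, huv, hv⟩ := huv
  have hvu : p v u = -p u v := (hp.isAlt.neg u v).symm
  have hun : p u (p u v) = -v := by simp [hp.apply_apply_self, huv, hu]
  have hvn : p v (p u v) = u := by
    rw [← neg_neg (p u v), ← hvu, map_neg, hp.apply_apply_self]
    simp [real_inner_comm u v, huv, hv]
  have hnu : p (p u v) u = v := by rw [← hp.isAlt.neg, hun, neg_neg]
  have hnv : p (p u v) v = -u := by rw [← hp.isAlt.neg, hvn]
  simp only [Set.mem_insert_iff, Set.mem_singleton_iff] at ha hb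
  rcases hb with rfl | rfl | rfl | rfl
  rotate_left 3
  · rw [real_inner_comm, hp.inner_apply_self_right]
  -- `⟪b, a z⟫ = -⟪a b, z⟫`, and `a b ∈ {0, ±u, ±v, ±uv}` is orthogonal to `z`
  all_goals
    rw [real_inner_comm, hp.inner_apply_swap_s11, neg_eq_zero]
    rcases ha with rfl | rfl | rfl <;>
      simp [hp.isAlt.self_eq_zero, hvu, hun, hvn, hnu, hnv, hzu, hzv, hzn]

end IsVectorProduct_s11

def IsCayleyAngle (p : V →ₗ[ℝ] V →ₗ[ℝ] V) (δ : V →ₗ[ℝ] V) (lam μ ν α : ℝ) : Prop :=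
  ∃ u v z : V, Orthonormal ℝ ![u, v, p u v, z] ∧
    δ u = μ • u ∧ δ v = μ • v ∧
    δ (p u z) = ν • p u z ∧ δ (p v z) = ν • p v z ∧
    δ (p (p u v) z) = ν • p (p u v) z ∧
    δ (cos α • p u v - sin α • z) = lam • (cos α • p u v - sin α • z) ∧
    δ (sin α • p u v + cos α • z) = ν • (sin α • p u v + cos α • z)

theorem IsVectorProduct_s11.isCayleyAngle_arccos {p : V →ₗ[ℝ] V →ₗ[ℝ] V} (hp : IsVectorProduct_s11 p)
    {δ : V →ₗ[ℝ] V} (hδ : δ.IsSymmetric) {lam μ ν : ℝ} (hlm : lam ≠ μ) {u v e : V}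
    (huv : Orthonormal ℝ ![u, v]) (he : ‖e‖ = 1) (hElam : eigenspace δ lam = ℝ ∙ e)
    (hEmu : eigenspace δ μ = span ℝ {u, v})
    (hEnu : eigenspace δ ν = (eigenspace δ lam)ᗮ ⊓ (eigenspace δ μ)ᗮ)
    (hK : 2 ≤ finrank ℝ (eigenspace δ μ)ᗮ) :
    IsCayleyAngle p δ lam μ ν (arccos ⟪e, p u v⟫) := by
  have huvn := hp.orthonormal u v huv
  simp at huvn
  obtain ⟨hu, ⟨huv', hun⟩, hv, hvn, hn⟩ := huvn
  have heK : e ∈ (span ℝ {u, v})ᗮ :=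
    hEmu ▸ (hδ.orthogonalFamily_eigenspaces.isOrtho hlm).le (hElam ▸ mem_span_singleton_self e)
  rw [hEmu] at hK
  obtain ⟨z, hzK, hz, hnz, hez⟩ := exists_eq_cos_arccos_smul_sub_sin_arccos_smul hK heK
    (mem_orthogonal_span_pair.mpr ⟨hun, hvn⟩) he hn
  set α := arccos ⟪e, p u v⟫
  obtain ⟨hzu, hzv⟩ := mem_orthogonal_span_pair.mp hzK
  have hmem_nu (w : V) (hew : ⟪e, w⟫ = 0) (huw : ⟪u, w⟫ = 0) (hvw : ⟪v, w⟫ = 0) :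
      δ w = ν • w := by
    rw [← mem_eigenspace_iff, hEnu, hElam, hEmu]
    exact ⟨mem_orthogonal_singleton_iff_inner_right.mpr hew,
      mem_orthogonal_span_pair.mpr ⟨huw, hvw⟩⟩
  have hmem_nu_apply (a : V) (ha : a ∈ ({u, v, p u v} : Set V)) : δ (p a z) = ν • p a z := by
    have h (b : V) (hb : b ∈ ({u, v, p u v, z} : Set V)) :=
      hp.inner_apply_eq_zero_of_cayley huv hzu hzv hnz ha hb
    refine hmem_nu _ ?_ (h u (by simp)) (h v (by simp))
    rw [hez, inner_sub_left, real_inner_smul_left, real_inner_smul_left, h (p u v) (by simp),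
      h z (by simp)]
    ring
  have hmem_mu (x : V) (hx : x ∈ ({u, v} : Set V)) : δ x = μ • x := by
    rw [← mem_eigenspace_iff, hEmu]
    exact subset_span hx
  refine ⟨u, v, z, ?_, hmem_mu u (by simp), hmem_mu v (by simp), hmem_nu_apply u (by simp),
    hmem_nu_apply v (by simp), hmem_nu_apply (p u v) (by simp), ?_, ?_⟩
  · simp [Fin.forall_fin_succ, hu, huv', hun, hv, hvn, hn, hzu, hzv, hnz, hz]
  · rw [← hez, ← mem_eigenspace_iff, hElam]
    exact mem_span_singleton_self e
  · refine hmem_nu _ ?_ ?_ ?_ <;>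
      simp [hez, inner_add_right, inner_sub_left, real_inner_smul_left, real_inner_smul_right,
        real_inner_comm (p u v) z, hun, hvn, hzu, hzv, hnz, hn, hz]
    ring

theorem IsCayleyAngle.cos_eq_abs_inner {p : V →ₗ[ℝ] V →ₗ[ℝ] V} {δ : V →ₗ[ℝ] V} {lam μ ν β : ℝ}
    (h : IsCayleyAngle p δ lam μ ν β) (hp : p.IsAlt) (hβ : β ∈ Set.Icc 0 (π / 2)) {u v e : V}
    (hn : ‖p u v‖ = 1) (he : ‖e‖ = 1) (hElam : eigenspace δ lam = ℝ ∙ e)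
    (hEmu : eigenspace δ μ = span ℝ {u, v}) :
    cos β = |⟪e, p u v⟫| := by
  obtain ⟨u', v', z', hon, hu', hv', -, -, -, hw, -⟩ := h
  simp [Fin.forall_fin_succ] at hon
  obtain ⟨-, -, -, -, hn', hn'z', hz'⟩ := hon
  obtain ⟨D, hD⟩ := hp.apply_eq_smul_of_mem_span_pair
    (hEmu ▸ mem_eigenspace_iff.mpr hu') (hEmu ▸ mem_eigenspace_iff.mpr hv')
  have hD1 : |D| = 1 := by simpa [hD, norm_smul, hn] using hn'
  set w := cos β • p u' v' - sin β • z'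
  have hwn' : ⟪w, p u' v'⟫ = cos β := by
    simp [w, inner_sub_left, real_inner_smul_left, real_inner_comm (p u' v') z', hn', hn'z']
  have hwz' : ⟪w, z'⟫ = -sin β := by
    simp [w, inner_sub_left, real_inner_smul_left, hn'z', hz']
  have hw1 : ‖w‖ = 1 := by
    rw [← pow_eq_one_iff_of_nonneg (norm_nonneg w) two_ne_zero, ← real_inner_self_eq_norm_sq]
    nth_rewrite 2 [show w = cos β • p u' v' - sin β • z' from rfl]
    rw [inner_sub_right, real_inner_smul_right, real_inner_smul_right, hwn', hwz']
    linear_combination sin_sq_add_cos_sq β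
  obtain ⟨r, hr⟩ := mem_span_singleton.mp (hElam ▸ mem_eigenspace_iff.mpr hw)
  have hr1 : |r| = 1 := by simpa [← hr, norm_smul, he] using hw1
  rw [← abs_of_nonneg (cos_nonneg_of_mem_Icc ⟨by linarith [hβ.1, pi_pos], by linarith [hβ.2]⟩),
    ← hwn', ← hr, hD, real_inner_smul_left, real_inner_smul_right, abs_mul, abs_mul, hr1, hD1,
    one_mul, one_mul]

end

theorem stmt11
    {V : Type*} [NormedAddCommGroup V] [InnerProductSpace ℝ V]
    [FiniteDimensional ℝ V] (hdim : Module.finrank ℝ V = 7)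
    (π : V →ₗ[ℝ] V →ₗ[ℝ] V) (hπalt : ∀ x : V, π x x = 0)
    (hπvp : ∀ u v : V, Orthonormal ℝ ![u, v] → Orthonormal ℝ ![u, v, π u v])
    (lam μ ν : ℝ) (hlm : lam ≠ μ) (hln : lam ≠ ν) (hmn : μ ≠ ν)
    (δ : V →ₗ[ℝ] V) (hδ : LinearMap.IsSymmetric δ)
    (h1 : Module.finrank ℝ (Module.End.eigenspace δ lam) = 1)
    (h2 : Module.finrank ℝ (Module.End.eigenspace δ μ) = 2)
    (h4 : Module.finrank ℝ (Module.End.eigenspace δ ν) = 4) :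
    ∃! α : ℝ, α ∈ Set.Icc (0 : ℝ) (Real.pi / 2) ∧ ∃ u v z : V,
      Orthonormal ℝ ![u, v, π u v, z] ∧
      δ u = μ • u ∧ δ v = μ • v ∧
      δ (π u z) = ν • π u z ∧ δ (π v z) = ν • π v z ∧
      δ (π (π u v) z) = ν • π (π u v) z ∧
      δ (Real.cos α • π u v - Real.sin α • z) =
        lam • (Real.cos α • π u v - Real.sin α • z) ∧
      δ (Real.sin α • π u v + Real.cos α • z) =
        ν • (Real.sin α • π u v + Real.cos α • z) := by
  show ∃! α, α ∈ Set.Icc 0 (Real.pi / 2) ∧ IsCayleyAngle π δ lam μ ν α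
  have hp : IsVectorProduct_s11 π := ⟨hπalt, hπvp⟩
  obtain ⟨u, v, huv, hEmu⟩ := Submodule.exists_orthonormal_span_pair_eq h2
  obtain ⟨e, he, hElam, he_nonneg⟩ := Submodule.exists_norm_eq_one_span_singleton_eq h1 (π u v)
  have hn : ‖π u v‖ = 1 := by simpa using (hp.orthonormal u v huv).norm_eq_one 2
  have hEnu := hδ.eigenspace_eq_inf_orthogonal hlm hln hmn (by omega)
  have hK : 2 ≤ Module.finrank ℝ (Module.End.eigenspace δ μ)ᗮ := by
    have := (Module.End.eigenspace δ μ).finrank_add_finrank_orthogonal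
    omega
  have hα := hp.isCayleyAngle_arccos hδ hlm huv he hElam hEmu hEnu hK
  have hαmem : Real.arccos ⟪e, π u v⟫ ∈ Set.Icc 0 (Real.pi / 2) :=
    ⟨Real.arccos_nonneg _, Real.arccos_le_pi_div_two.mpr he_nonneg⟩
  have hsub : Set.Icc 0 (Real.pi / 2) ⊆ Set.Icc 0 Real.pi :=
    Set.Icc_subset_Icc_right (by linarith [Real.pi_pos])
  refine ⟨_, ⟨hαmem, hα⟩, fun β ⟨hβ, hβα⟩ => Real.injOn_cos (hsub hβ) (hsub hαmem) ?_⟩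
  rw [hβα.cos_eq_abs_inner hπalt hβ hn he hElam hEmu,
    hα.cos_eq_abs_inner hπalt hαmem hn he hElam hEmu]
end

section
/- Let V = X ⊕ Y ⊕ Z be an orthogonal direct sum decomposition into nonzero subspaces with dim X = 3 and dim Y ≥ 2 (so (dim Y, dim Z) is (3,1) or (2,2)). Then there exist a Cayley triple (u, v, z), a real number α, and unit vectors e ∈ X, f ∈ Y such that u, v ∈ X, uv = cos α • e + sin α • f, z = -sin α • e + cos α • f, and uz ∈ Y if (dim Y, dim Z) = (3, 1), while uz ∈ Z if (dim Y, dim Z) = (2, 2). -/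
open scoped RealInnerProductSpace

section
variable {V : Type*} [NormedAddCommGroup V] [InnerProductSpace ℝ V]

lemma pi_anti (π : V →ₗ[ℝ] V →ₗ[ℝ] V) (hπalt : ∀ x : V, π x x = 0) (x y : V) :
    π x y = - π y x := by
  have h := hπalt (x + y)
  simp only [map_add, LinearMap.add_apply, hπalt] at h
  have h2 : π x y + π y x = 0 := by
    have h3 : π y x + π x y = 0 := by simpa using h
    rw [add_comm] at h3; exact h3
  exact eq_neg_of_add_eq_zero_left h2

lemma onb2 {u v : V} (hu : ‖u‖ = 1) (hv : ‖v‖ = 1) (huv : ⟪u, v⟫ = 0) :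
    Orthonormal ℝ ![u, v] := by
  constructor
  · intro i; fin_cases i <;> simpa
  · intro i j hij
    fin_cases i <;> fin_cases j <;> simp_all [real_inner_comm u v]

lemma pi_perp (π : V →ₗ[ℝ] V →ₗ[ℝ] V) (hπalt : ∀ x : V, π x x = 0)
    (hπvp : ∀ u v : V, Orthonormal ℝ ![u, v] → Orthonormal ℝ ![u, v, π u v])
    (x y : V) : ⟪π x y, x⟫ = 0 ∧ ⟪π x y, y⟫ = 0 := by
  by_cases hx : x = 0
  · simp [hx]
  obtain ⟨u, hxu, hu, t, y', hyy, huy'⟩ :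
      ∃ u : V, x = ‖x‖ • u ∧ ‖u‖ = 1 ∧ ∃ (t : ℝ) (y' : V), y = y' + t • u ∧ ⟪u, y'⟫ = 0 := by
    have hnx : ‖x‖ ≠ 0 := by simpa using hx
    refine ⟨‖x‖⁻¹ • x, by rw [smul_smul, mul_inv_cancel₀ hnx, one_smul], ?_,
      ⟪‖x‖⁻¹ • x, y⟫, y - ⟪‖x‖⁻¹ • x, y⟫ • ‖x‖⁻¹ • x, by abel, ?_⟩
    · rw [norm_smul]; simp [abs_of_nonneg (norm_nonneg x), inv_mul_cancel₀ hnx]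
    · rw [inner_sub_right, real_inner_smul_right, real_inner_self_eq_norm_sq]
      rw [norm_smul]; simp [abs_of_nonneg (norm_nonneg x), inv_mul_cancel₀ hnx]
  have hxy : π x y = ‖x‖ • π u y' := by
    conv_lhs => rw [hxu, hyy]
    simp [map_smul, map_add, hπalt]
  by_cases hy' : y' = 0
  · rw [hxy, hy', map_zero]; simp
  obtain ⟨w, hy'w, hw, huw⟩ :
      ∃ w : V, y' = ‖y'‖ • w ∧ ‖w‖ = 1 ∧ ⟪u, w⟫ = 0 := by
    have hny' : ‖y'‖ ≠ 0 := by simpa using hy'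
    refine ⟨‖y'‖⁻¹ • y', by rw [smul_smul, mul_inv_cancel₀ hny', one_smul], ?_, ?_⟩
    · rw [norm_smul]; simp [abs_of_nonneg (norm_nonneg y'), inv_mul_cancel₀ hny']
    · rw [real_inner_smul_right, huy', mul_zero]
  have honb := hπvp u w (onb2 hu hw huw)
  have h1 : ⟪π u w, u⟫ = 0 := by
    have := honb.2 (i := 2) (j := 0) (by decide)
    simpa [real_inner_comm] using this
  have h2 : ⟪π u w, w⟫ = 0 := by
    have := honb.2 (i := 2) (j := 1) (by decide)
    simpa [real_inner_comm] using this
  have hπxy : π x y = (‖x‖ * ‖y'‖) • π u w := by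
    conv_lhs => rw [hxy, hy'w]
    rw [map_smul, smul_smul]
  constructor
  · rw [hπxy, real_inner_smul_left]
    conv_lhs => rw [hxu]
    rw [real_inner_smul_right, h1]; ring
  · rw [hπxy, real_inner_smul_left]
    conv_lhs => rw [hyy, hy'w]
    rw [inner_add_right, real_inner_smul_right, real_inner_smul_right, h1, h2]; ring

lemma inner_pi_left (π : V →ₗ[ℝ] V →ₗ[ℝ] V) (hπalt : ∀ x : V, π x x = 0)
    (hπvp : ∀ u v : V, Orthonormal ℝ ![u, v] → Orthonormal ℝ ![u, v, π u v])
    (x a b : V) : ⟪π x a, b⟫ = - ⟪π x b, a⟫ := by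
  have h := (pi_perp π hπalt hπvp x (a + b)).2
  simp only [map_add, inner_add_left, inner_add_right] at h
  have ha := (pi_perp π hπalt hπvp x a).2
  have hb := (pi_perp π hπalt hπvp x b).2
  linarith

lemma pi_norm_eq (π : V →ₗ[ℝ] V →ₗ[ℝ] V) (hπalt : ∀ x : V, π x x = 0)
    (hπvp : ∀ u v : V, Orthonormal ℝ ![u, v] → Orthonormal ℝ ![u, v, π u v])
    {u : V} (hu : ‖u‖ = 1) {x : V} (hx : ⟪u, x⟫ = 0) : ‖π u x‖ = ‖x‖ := by
  by_cases h0 : x = 0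
  · simp [h0]
  have hnx : ‖x‖ ≠ 0 := by simpa using h0
  have hw : ‖‖x‖⁻¹ • x‖ = 1 := by
    rw [norm_smul]; simp [abs_of_nonneg (norm_nonneg x), inv_mul_cancel₀ hnx]
  have huw : ⟪u, ‖x‖⁻¹ • x⟫ = 0 := by rw [real_inner_smul_right, hx, mul_zero]
  have honb := hπvp u _ (onb2 hu hw huw)
  have h1 : ‖π u (‖x‖⁻¹ • x)‖ = 1 := honb.1 2
  have : π u x = ‖x‖ • π u (‖x‖⁻¹ • x) := by
    rw [map_smul, smul_smul, mul_inv_cancel₀ hnx, one_smul]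
  rw [this, norm_smul, h1, norm_norm, mul_one]

lemma pi_inner_pi (π : V →ₗ[ℝ] V →ₗ[ℝ] V) (hπalt : ∀ x : V, π x x = 0)
    (hπvp : ∀ u v : V, Orthonormal ℝ ![u, v] → Orthonormal ℝ ![u, v, π u v])
    {u x y : V} (hu : ‖u‖ = 1) (hx : ⟪u, x⟫ = 0) (hy : ⟪u, y⟫ = 0) :
    ⟪π u x, π u y⟫ = ⟪x, y⟫ := by
  have hxy : ⟪u, x + y⟫ = 0 := by rw [inner_add_right, hx, hy, add_zero]
  have e1 := pi_norm_eq π hπalt hπvp hu hx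
  have e2 := pi_norm_eq π hπalt hπvp hu hy
  have e3 := pi_norm_eq π hπalt hπvp hu hxy
  have n1 := norm_add_sq_real (π u x) (π u y)
  have n2 := norm_add_sq_real x y
  rw [← map_add] at n1
  rw [e3] at n1
  rw [e1, e2] at n1
  linarith [n1, n2]
end

section
variable {V : Type*} [NormedAddCommGroup V] [InnerProductSpace ℝ V] [FiniteDimensional ℝ V]

lemma exists_unit_perp {n : ℕ} (S : Submodule ℝ V) (a : Fin n → V)
    (hn : n < Module.finrank ℝ S) :
    ∃ e : V, e ∈ S ∧ ‖e‖ = 1 ∧ ∀ i, ⟪a i, e⟫ = 0 := by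
  let φ : S →ₗ[ℝ] (Fin n → ℝ) :=
    { toFun := fun x i => ⟪a i, (x : V)⟫
      map_add' := by intro x y; funext i; simp [inner_add_right]
      map_smul' := by intro c x; funext i; simp [real_inner_smul_right] }
  have hker : LinearMap.ker φ ≠ ⊥ := by
    intro hbot
    have h1 := LinearMap.finrank_range_add_finrank_ker φ
    have h2 : Module.finrank ℝ (LinearMap.range φ) ≤ n := by
      simpa using Submodule.finrank_le (LinearMap.range φ)
    rw [hbot] at h1
    simp [finrank_bot] at h1
    omega
  obtain ⟨x, hxk, hx0⟩ := (Submodule.ne_bot_iff _).1 hker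
  have hnx : ‖(x : V)‖ ≠ 0 := by
    simp only [ne_eq, norm_eq_zero]
    intro h; apply hx0; ext; simpa using h
  refine ⟨‖(x : V)‖⁻¹ • (x : V), S.smul_mem _ x.2, ?_, ?_⟩
  · rw [norm_smul]; simp [abs_of_nonneg (norm_nonneg _), inv_mul_cancel₀ hnx]
  · intro i
    have : ⟪a i, (x : V)⟫ = 0 := congrFun (LinearMap.mem_ker.1 hxk) i
    rw [real_inner_smul_right, this, mul_zero]

lemma span_triple_eq {X : Submodule ℝ V} (hX : Module.finrank ℝ X = 3)
    {b₁ b₂ b₃ : V} (h1 : b₁ ∈ X) (h2 : b₂ ∈ X) (h3 : b₃ ∈ X)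
    (hon : Orthonormal ℝ ![b₁, b₂, b₃]) :
    Submodule.span ℝ {b₁, b₂, b₃} = X := by
  have hle : Submodule.span ℝ {b₁, b₂, b₃} ≤ X := by
    rw [Submodule.span_le]; intro x hx
    rcases hx with rfl | rfl | rfl <;> assumption
  apply Submodule.eq_of_le_of_finrank_le hle
  have hr : Set.range ![b₁, b₂, b₃] = {b₁, b₂, b₃} := by
    simp [Matrix.range_cons, Matrix.range_empty, Set.union_assoc]
    ext x; simp; tauto
  have := finrank_span_eq_card hon.linearIndependent
  rw [hr] at this
  rw [hX, this]; simp

lemma span_pair_eq {X : Submodule ℝ V} (hX : Module.finrank ℝ X = 2)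
    {b₁ b₂ : V} (h1 : b₁ ∈ X) (h2 : b₂ ∈ X)
    (hon : Orthonormal ℝ ![b₁, b₂]) :
    Submodule.span ℝ {b₁, b₂} = X := by
  have hle : Submodule.span ℝ {b₁, b₂} ≤ X := by
    rw [Submodule.span_le]; intro x hx
    rcases hx with rfl | rfl <;> assumption
  apply Submodule.eq_of_le_of_finrank_le hle
  have hr : Set.range ![b₁, b₂] = {b₁, b₂} := by
    simp [Matrix.range_cons, Matrix.range_empty]
    ext x; simp; tauto
  have := finrank_span_eq_card hon.linearIndependent
  rw [hr] at this
  rw [hX, this]; simp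

lemma span_single_eq {X : Submodule ℝ V} (hX : Module.finrank ℝ X = 1)
    {b₁ : V} (h1 : b₁ ∈ X) (hb : ‖b₁‖ = 1) :
    Submodule.span ℝ {b₁} = X := by
  have hle : Submodule.span ℝ {b₁} ≤ X := by
    rw [Submodule.span_le]; intro x hx; rcases hx with rfl; assumption
  apply Submodule.eq_of_le_of_finrank_le hle
  rw [finrank_span_singleton (by intro h; rw [h] at hb; simp at hb), hX]

omit [FiniteDimensional ℝ V] in
lemma perp_of_span {s : Set V} {q : V} (h : ∀ y ∈ s, ⟪y, q⟫ = 0) :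
    ∀ x ∈ Submodule.span ℝ s, ⟪x, q⟫ = 0 := by
  intro x hx
  induction hx using Submodule.span_induction with
  | mem y hy => exact h y hy
  | zero => simp
  | add y z _ _ hy hz => rw [inner_add_left, hy, hz, add_zero]
  | smul c y _ hy => rw [real_inner_smul_left, hy, mul_zero]

omit [FiniteDimensional ℝ V] in
lemma mem_third {X Y Z : Submodule ℝ V}
    (hXY : ∀ x ∈ X, ∀ y ∈ Y, ⟪x, y⟫ = 0)
    (hXZ : ∀ x ∈ X, ∀ w ∈ Z, ⟪x, w⟫ = 0)
    (hYZ : ∀ y ∈ Y, ∀ w ∈ Z, ⟪y, w⟫ = 0)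
    (hsup : X ⊔ Y ⊔ Z = ⊤) (q : V)
    (hqX : ∀ x ∈ X, ⟪x, q⟫ = 0) (hqZ : ∀ w ∈ Z, ⟪w, q⟫ = 0) : q ∈ Y := by
  have hq : q ∈ X ⊔ Y ⊔ Z := by rw [hsup]; trivial
  obtain ⟨p, hp, zz, hzz, rfl⟩ := Submodule.mem_sup.1 hq
  obtain ⟨x, hx, y, hy, rfl⟩ := Submodule.mem_sup.1 hp
  have hx0 : x = 0 := by
    have h1 : ⟪x, x + y + zz⟫ = ‖x‖ ^ 2 := by
      rw [inner_add_right, inner_add_right, hXY x hx y hy, hXZ x hx zz hzz,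
        real_inner_self_eq_norm_sq]; ring
    have h2 := hqX x hx
    rw [h2] at h1
    have := (norm_eq_zero (a := x)).1 (by nlinarith [norm_nonneg x])
    exact this
  have hz0 : zz = 0 := by
    have e1 : ⟪zz, x⟫ = 0 := by rw [real_inner_comm]; exact hXZ x hx zz hzz
    have e2 : ⟪zz, y⟫ = 0 := by rw [real_inner_comm]; exact hYZ y hy zz hzz
    have h1 : ⟪zz, x + y + zz⟫ = ‖zz‖ ^ 2 := by
      rw [inner_add_right, inner_add_right, e1, e2, real_inner_self_eq_norm_sq]; ring
    rw [hqZ zz hzz] at h1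
    exact (norm_eq_zero (a := zz)).1 (by nlinarith [norm_nonneg zz])
  rw [hx0, hz0]; simpa using hy
end

lemma sq3_zero {x y z : ℝ} (h : x^2 + y^2 + z^2 = 0) : x = 0 ∧ y = 0 ∧ z = 0 := by
  refine ⟨?_, ?_, ?_⟩ <;>
  [ (have : x^2 = 0 := by nlinarith [sq_nonneg y, sq_nonneg z]);
    (have : y^2 = 0 := by nlinarith [sq_nonneg x, sq_nonneg z]);
    (have : z^2 = 0 := by nlinarith [sq_nonneg x, sq_nonneg y])] <;>
  exact pow_eq_zero_iff (by norm_num) |>.1 this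

lemma cross_aux (p1 p2 p3 d1 d2 d3 t1 t2 t3 : ℝ)
    (hpp : p1^2 + p2^2 + p3^2 = 1) (hdd : d1^2 + d2^2 + d3^2 = 1)
    (hpd2 : (p1*d1 + p2*d2 + p3*d3)^2 = 1)
    (hdt : d1*t1 + d2*t2 + d3*t3 = 0) :
    p1*t1 + p2*t2 + p3*t3 = 0 := by
  have hfac : (p1*d1 + p2*d2 + p3*d3 - 1) * (p1*d1 + p2*d2 + p3*d3 + 1) = 0 := by
    linear_combination hpd2
  rcases mul_eq_zero.1 hfac with h | h
  · have hsq : (p1 - d1)^2 + (p2 - d2)^2 + (p3 - d3)^2 = 0 := by linear_combination hpp + hdd - 2*h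
    obtain ⟨e1, e2, e3⟩ := sq3_zero hsq
    have f1 : p1 = d1 := by linarith
    have f2 : p2 = d2 := by linarith
    have f3 : p3 = d3 := by linarith
    rw [f1, f2, f3]; linarith
  · have hsq : (p1 + d1)^2 + (p2 + d2)^2 + (p3 + d3)^2 = 0 := by linear_combination hpp + hdd + 2*h
    obtain ⟨e1, e2, e3⟩ := sq3_zero hsq
    have f1 : p1 = -d1 := by linarith
    have f2 : p2 = -d2 := by linarith
    have f3 : p3 = -d3 := by linarith
    rw [f1, f2, f3]; linarith

lemma cross_lemma (a1 a2 a3 c1 c2 c3 d1 d2 d3 t1 t2 t3 : ℝ)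
    (haa : a1^2 + a2^2 + a3^2 = 1) (hcc : c1^2 + c2^2 + c3^2 = 1)
    (hdd : d1^2 + d2^2 + d3^2 = 1)
    (hac : a1*c1 + a2*c2 + a3*c3 = 0) (had : a1*d1 + a2*d2 + a3*d3 = 0)
    (hcd : c1*d1 + c2*d2 + c3*d3 = 0)
    (hdt : d1*t1 + d2*t2 + d3*t3 = 0) :
    (a2*c3 - a3*c2)*t1 + (a3*c1 - a1*c3)*t2 + (a1*c2 - a2*c1)*t3 = 0 := by
  apply cross_aux _ _ _ d1 d2 d3 _ _ _ _ hdd _ hdt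
  · nlinarith [haa, hcc, hac, sq_nonneg (a1*c1+a2*c2+a3*c3)]
  · linear_combination ((c1^2+c2^2+c3^2)*(d1^2+d2^2+d3^2))*haa + (d1^2+d2^2+d3^2)*hcc + hdd
      + (2*(a1*d1+a2*d2+a3*d3)*(c1*d1+c2*d2+c3*d3) - (d1^2+d2^2+d3^2)*(a1*c1+a2*c2+a3*c3))*hac
      + (-((c1^2+c2^2+c3^2)*(a1*d1+a2*d2+a3*d3)))*had
      + (-((a1^2+a2^2+a3^2)*(c1*d1+c2*d2+c3*d3)))*hcd

section
variable {V : Type*} [NormedAddCommGroup V] [InnerProductSpace ℝ V]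

lemma norm_eq_one_of_sq {x : V} (h : ‖x‖ ^ 2 = 1) : ‖x‖ = 1 := by
  have h3 : (‖x‖ - 1) * (‖x‖ + 1) = 0 := by linear_combination h
  rcases mul_eq_zero.1 h3 with h4 | h4
  · linarith
  · linarith [norm_nonneg x]

lemma onb4 {u v p z : V} (hu : ‖u‖ = 1) (hv : ‖v‖ = 1) (hp : ‖p‖ = 1) (hz : ‖z‖ = 1)
    (h1 : ⟪u, v⟫ = 0) (h2 : ⟪u, p⟫ = 0) (h3 : ⟪u, z⟫ = 0)
    (h4 : ⟪v, p⟫ = 0) (h5 : ⟪v, z⟫ = 0) (h6 : ⟪p, z⟫ = 0) :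
    Orthonormal ℝ ![u, v, p, z] := by
  constructor
  · intro i; fin_cases i <;> simpa
  · intro i j hij
    fin_cases i <;> fin_cases j <;>
      simp_all [real_inner_comm u v, real_inner_comm u p, real_inner_comm u z,
        real_inner_comm v p, real_inner_comm v z, real_inner_comm p z]
end

section
variable {V : Type*} [NormedAddCommGroup V] [InnerProductSpace ℝ V]

lemma core (π : V →ₗ[ℝ] V →ₗ[ℝ] V) (hπalt : ∀ x : V, π x x = 0)
    (hπvp : ∀ u v : V, Orthonormal ℝ ![u, v] → Orthonormal ℝ ![u, v, π u v])
    (u₀ v₀ e f t : V)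
    (hu₀ : ‖u₀‖ = 1) (hv₀ : ‖v₀‖ = 1) (he : ‖e‖ = 1) (hf : ‖f‖ = 1)
    (hu₀v₀ : ⟪u₀, v₀⟫ = 0) (hu₀e : ⟪u₀, e⟫ = 0) (hv₀e : ⟪v₀, e⟫ = 0)
    (hu₀f : ⟪u₀, f⟫ = 0) (hv₀f : ⟪v₀, f⟫ = 0) (hef : ⟪e, f⟫ = 0)
    (α : ℝ) (hπuv : π u₀ v₀ = Real.cos α • e + Real.sin α • f)
    (W : Submodule ℝ V)
    (hcrit : ∀ q : V, ⟪u₀, q⟫ = 0 → ⟪v₀, q⟫ = 0 → ⟪e, q⟫ = 0 → ⟪f, q⟫ = 0 →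
      ⟪t, q⟫ = 0 → q ∈ W) :
    ∃ u v : V, u ∈ Submodule.span ℝ {u₀, v₀} ∧ v ∈ Submodule.span ℝ {u₀, v₀} ∧
      Orthonormal ℝ ![u, v, π u v, -Real.sin α • e + Real.cos α • f] ∧
      π u v = Real.cos α • e + Real.sin α • f ∧
      π u (-Real.sin α • e + Real.cos α • f) ∈ W := by
  set z : V := -Real.sin α • e + Real.cos α • f with hzdef
  have i00 : ⟪u₀, u₀⟫ = 1 := by rw [real_inner_self_eq_norm_sq, hu₀]; norm_num
  have i11 : ⟪v₀, v₀⟫ = 1 := by rw [real_inner_self_eq_norm_sq, hv₀]; norm_num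
  have i10 : ⟪v₀, u₀⟫ = 0 := by rw [real_inner_comm]; exact hu₀v₀
  have iee : ⟪e, e⟫ = 1 := by rw [real_inner_self_eq_norm_sq, he]; norm_num
  have iff' : ⟪f, f⟫ = 1 := by rw [real_inner_self_eq_norm_sq, hf]; norm_num
  have ife : ⟪f, e⟫ = 0 := by rw [real_inner_comm]; exact hef
  obtain ⟨u, v, humem, hvmem, hu₀mem, hv₀mem, hun, hvn, huv, hπeq, hABz⟩ :
      ∃ u v : V, u ∈ Submodule.span ℝ {u₀, v₀} ∧ v ∈ Submodule.span ℝ {u₀, v₀} ∧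
        u₀ ∈ Submodule.span ℝ {u, v} ∧ v₀ ∈ Submodule.span ℝ {u, v} ∧
        ‖u‖ = 1 ∧ ‖v‖ = 1 ∧ ⟪u, v⟫ = 0 ∧ π u v = π u₀ v₀ ∧ ⟪t, π u z⟫ = 0 := by
    set A : ℝ := ⟪t, π u₀ z⟫ with hA
    set B : ℝ := ⟪t, π v₀ z⟫ with hB
    by_cases hAB : A ^ 2 + B ^ 2 = 0
    · have hA0 : A = 0 := by nlinarith [sq_nonneg A, sq_nonneg B]
      refine ⟨u₀, v₀, Submodule.subset_span (by simp), Submodule.subset_span (by simp),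
        Submodule.subset_span (by simp), Submodule.subset_span (by simp),
        hu₀, hv₀, hu₀v₀, rfl, by rw [← hA]; exact hA0⟩
    · set r : ℝ := Real.sqrt (A ^ 2 + B ^ 2) with hrdef
      have hr2 : r ^ 2 = A ^ 2 + B ^ 2 := Real.sq_sqrt (by positivity)
      have hrpos : 0 < r := Real.sqrt_pos.2 (lt_of_le_of_ne (by positivity) (Ne.symm hAB))
      have hrne : r ≠ 0 := ne_of_gt hrpos
      refine ⟨r⁻¹ • (B • u₀ - A • v₀), r⁻¹ • (A • u₀ + B • v₀), ?_, ?_, ?_, ?_, ?_, ?_, ?_, ?_, ?_⟩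
      · exact Submodule.smul_mem _ _ (Submodule.sub_mem _
          (Submodule.smul_mem _ _ (Submodule.subset_span (by simp)))
          (Submodule.smul_mem _ _ (Submodule.subset_span (by simp))))
      · exact Submodule.smul_mem _ _ (Submodule.add_mem _
          (Submodule.smul_mem _ _ (Submodule.subset_span (by simp)))
          (Submodule.smul_mem _ _ (Submodule.subset_span (by simp))))
      · rw [Submodule.mem_span_pair]
        refine ⟨r⁻¹ * B, r⁻¹ * A, ?_⟩
        have : (r⁻¹ * B) • (r⁻¹ • (B • u₀ - A • v₀)) + (r⁻¹ * A) • (r⁻¹ • (A • u₀ + B • v₀))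
            = (r⁻¹ * r⁻¹ * (B ^ 2 + A ^ 2)) • u₀ := by module
        rw [this]
        have hc : r⁻¹ * r⁻¹ * (B ^ 2 + A ^ 2) = 1 := by
          field_simp
          linarith [hr2]
        rw [hc, one_smul]
      · rw [Submodule.mem_span_pair]
        refine ⟨-(r⁻¹ * A), r⁻¹ * B, ?_⟩
        have : (-(r⁻¹ * A)) • (r⁻¹ • (B • u₀ - A • v₀)) + (r⁻¹ * B) • (r⁻¹ • (A • u₀ + B • v₀))
            = (r⁻¹ * r⁻¹ * (A ^ 2 + B ^ 2)) • v₀ := by module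
        rw [this]
        have hc : r⁻¹ * r⁻¹ * (A ^ 2 + B ^ 2) = 1 := by
          field_simp
          linarith [hr2]
        rw [hc, one_smul]
      · apply norm_eq_one_of_sq
        rw [← real_inner_self_eq_norm_sq]
        simp only [inner_smul_left, inner_smul_right, inner_sub_left, inner_sub_right,
          inner_add_left, inner_add_right, i00, i11, i10, hu₀v₀, RCLike.ofReal_real_eq_id,
          id_eq, conj_trivial]
        field_simp
        linarith [hr2]
      · apply norm_eq_one_of_sq
        rw [← real_inner_self_eq_norm_sq]
        simp only [inner_smul_left, inner_smul_right, inner_sub_left, inner_sub_right,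
          inner_add_left, inner_add_right, i00, i11, i10, hu₀v₀, conj_trivial]
        field_simp
        linarith [hr2]
      · simp only [inner_smul_left, inner_smul_right, inner_sub_left, inner_add_right,
          i00, i11, i10, hu₀v₀, conj_trivial]
        ring
      · have hπexp : π (r⁻¹ • (B • u₀ - A • v₀)) (r⁻¹ • (A • u₀ + B • v₀))
            = (r⁻¹ * r⁻¹ * (B ^ 2 + A ^ 2)) • π u₀ v₀ := by
          simp only [map_smul, map_sub, map_add, LinearMap.smul_apply, LinearMap.sub_apply,
            LinearMap.add_apply, hπalt]
          rw [pi_anti π hπalt v₀ u₀]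
          module
        rw [hπexp]
        have hc : r⁻¹ * r⁻¹ * (B ^ 2 + A ^ 2) = 1 := by
          field_simp
          linarith [hr2]
        rw [hc, one_smul]
      · have hπz : π (r⁻¹ • (B • u₀ - A • v₀)) z = r⁻¹ • (B • π u₀ z - A • π v₀ z) := by
          simp only [map_smul, map_sub, LinearMap.smul_apply, LinearMap.sub_apply]
        rw [hπz]
        simp only [inner_smul_right, inner_sub_right]
        rw [← hA, ← hB]
        ring
  -- verification block
  have honb2 : Orthonormal ℝ ![u, v] := onb2 hun hvn huv
  have honb3 := hπvp u v honb2
  have hπn : ‖π u v‖ = 1 := by simpa using honb3.1 2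
  have hiuπ : ⟪u, π u v⟫ = 0 := by
    have := honb3.2 (i := 0) (j := 2) (by decide); simpa using this
  have hivπ : ⟪v, π u v⟫ = 0 := by
    have := honb3.2 (i := 1) (j := 2) (by decide); simpa using this
  have hπuv' : π u v = Real.cos α • e + Real.sin α • f := by rw [hπeq, hπuv]
  -- u, v are orthogonal to e and f
  have hue : ⟪u, e⟫ = 0 :=
    perp_of_span (by rintro y (rfl | rfl); exacts [hu₀e, hv₀e]) u humem
  have hve : ⟪v, e⟫ = 0 :=
    perp_of_span (by rintro y (rfl | rfl); exacts [hu₀e, hv₀e]) v hvmem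
  have huf : ⟪u, f⟫ = 0 :=
    perp_of_span (by rintro y (rfl | rfl); exacts [hu₀f, hv₀f]) u humem
  have hvf : ⟪v, f⟫ = 0 :=
    perp_of_span (by rintro y (rfl | rfl); exacts [hu₀f, hv₀f]) v hvmem
  -- facts about z
  have hzn : ‖z‖ = 1 := by
    apply norm_eq_one_of_sq
    rw [← real_inner_self_eq_norm_sq, hzdef]
    simp only [inner_add_left, inner_add_right, inner_smul_left, inner_smul_right,
      inner_neg_left, inner_neg_right, iee, iff', hef, ife, conj_trivial]
    linear_combination Real.sin_sq_add_cos_sq α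
  have huz : ⟪u, z⟫ = 0 := by
    rw [hzdef, inner_add_right, inner_smul_right, inner_smul_right, hue, huf]; ring
  have hvz : ⟪v, z⟫ = 0 := by
    rw [hzdef, inner_add_right, inner_smul_right, inner_smul_right, hve, hvf]; ring
  have hπz : ⟪π u v, z⟫ = 0 := by
    rw [hπuv', hzdef]
    simp only [inner_add_left, inner_add_right, inner_smul_left, inner_smul_right,
      iee, iff', hef, ife, conj_trivial]
    ring
  -- the vector q := π u z
  have hq_u : ⟪u, π u z⟫ = 0 := by
    rw [real_inner_comm]; exact (pi_perp π hπalt hπvp u z).1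
  have hq_z : ⟪z, π u z⟫ = 0 := by
    rw [real_inner_comm]; exact (pi_perp π hπalt hπvp u z).2
  have hq_v : ⟪v, π u z⟫ = 0 := by
    rw [real_inner_comm, inner_pi_left π hπalt hπvp u z v]
    rw [real_inner_comm] at hπz
    rw [show ⟪π u v, z⟫ = 0 from by rw [real_inner_comm]; exact hπz]
    ring
  have hq_πuv : ⟪π u v, π u z⟫ = 0 := by
    rw [pi_inner_pi π hπalt hπvp hun huv huz, hvz]
  have hq_e : ⟪e, π u z⟫ = 0 := by
    have hee : e = Real.cos α • π u v - Real.sin α • z := by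
      rw [hπuv', hzdef]
      have h2 : Real.cos α • (Real.cos α • e + Real.sin α • f)
          - Real.sin α • (-Real.sin α • e + Real.cos α • f)
          = (Real.cos α ^ 2 + Real.sin α ^ 2) • e := by module
      rw [h2, Real.cos_sq_add_sin_sq, one_smul]
    rw [hee, inner_sub_left, inner_smul_left, inner_smul_left, hq_πuv,
      show ⟪z, π u z⟫ = 0 from hq_z]
    ring
  have hq_f : ⟪f, π u z⟫ = 0 := by
    have hff : f = Real.sin α • π u v + Real.cos α • z := by
      rw [hπuv', hzdef]
      have h2 : Real.sin α • (Real.cos α • e + Real.sin α • f)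
          + Real.cos α • (-Real.sin α • e + Real.cos α • f)
          = (Real.sin α ^ 2 + Real.cos α ^ 2) • f := by module
      rw [h2, Real.sin_sq_add_cos_sq, one_smul]
    rw [hff, inner_add_left, inner_smul_left, inner_smul_left, hq_πuv,
      show ⟪z, π u z⟫ = 0 from hq_z]
    ring
  have hq_u₀ : ⟪u₀, π u z⟫ = 0 :=
    perp_of_span (by rintro y (rfl | rfl); exacts [hq_u, hq_v]) u₀ hu₀mem
  have hq_v₀ : ⟪v₀, π u z⟫ = 0 :=
    perp_of_span (by rintro y (rfl | rfl); exacts [hq_u, hq_v]) v₀ hv₀mem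
  refine ⟨u, v, humem, hvmem, ?_, hπuv', hcrit _ hq_u₀ hq_v₀ hq_e hq_f hABz⟩
  exact onb4 hun hvn hπn hzn huv hiuπ huz hivπ hvz hπz
end


section
variable {V : Type*} [NormedAddCommGroup V] [InnerProductSpace ℝ V]

lemma onb3 {u v w : V} (hu : ‖u‖ = 1) (hv : ‖v‖ = 1) (hw : ‖w‖ = 1)
    (huv : ⟪u, v⟫ = 0) (huw : ⟪u, w⟫ = 0) (hvw : ⟪v, w⟫ = 0) :
    Orthonormal ℝ ![u, v, w] := by
  constructor
  · intro i; fin_cases i <;> simpa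
  · intro i j hij
    fin_cases i <;> fin_cases j <;>
      simp_all [real_inner_comm u v, real_inner_comm u w, real_inner_comm v w]

lemma mem_span_triple {x a b c : V} (h : x ∈ Submodule.span ℝ {a, b, c}) :
    ∃ r s t : ℝ, x = r • a + s • b + t • c := by
  rw [show ({a, b, c} : Set V) = insert a {b, c} from rfl, Submodule.mem_span_insert] at h
  obtain ⟨r, z, hz, rfl⟩ := h
  rw [show ({b, c} : Set V) = insert b {c} from rfl, Submodule.mem_span_insert] at hz
  obtain ⟨s, z₂, hz₂, rfl⟩ := hz
  obtain ⟨t, rfl⟩ := Submodule.mem_span_singleton.1 hz₂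
  exact ⟨r, s, t, by abel⟩

lemma inner_comb3 {b₁ b₂ b₃ : V} (i11 : ⟪b₁, b₁⟫ = 1) (i22 : ⟪b₂, b₂⟫ = 1)
    (i33 : ⟪b₃, b₃⟫ = 1) (i12 : ⟪b₁, b₂⟫ = 0) (i13 : ⟪b₁, b₃⟫ = 0) (i23 : ⟪b₂, b₃⟫ = 0)
    (a₁ a₂ a₃ c₁ c₂ c₃ : ℝ) :
    ⟪a₁ • b₁ + a₂ • b₂ + a₃ • b₃, c₁ • b₁ + c₂ • b₂ + c₃ • b₃⟫
      = a₁ * c₁ + a₂ * c₂ + a₃ * c₃ := by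
  have j21 : ⟪b₂, b₁⟫ = 0 := by rw [real_inner_comm]; exact i12
  have j31 : ⟪b₃, b₁⟫ = 0 := by rw [real_inner_comm]; exact i13
  have j32 : ⟪b₃, b₂⟫ = 0 := by rw [real_inner_comm]; exact i23
  simp only [inner_add_left, inner_add_right, real_inner_smul_left, real_inner_smul_right,
    i11, i22, i33, i12, i13, i23, j21, j31, j32]
  ring

lemma key_perp (π : V →ₗ[ℝ] V →ₗ[ℝ] V) (hπalt : ∀ x : V, π x x = 0)
    {b₁ b₂ b₃ u₀ v₀ e ζ : V}
    (i11 : ⟪b₁, b₁⟫ = 1) (i22 : ⟪b₂, b₂⟫ = 1) (i33 : ⟪b₃, b₃⟫ = 1)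
    (i12 : ⟪b₁, b₂⟫ = 0) (i13 : ⟪b₁, b₃⟫ = 0) (i23 : ⟪b₂, b₃⟫ = 0)
    {a₁ a₂ a₃ c₁ c₂ c₃ d₁ d₂ d₃ : ℝ}
    (hu : u₀ = a₁ • b₁ + a₂ • b₂ + a₃ • b₃)
    (hv : v₀ = c₁ • b₁ + c₂ • b₂ + c₃ • b₃)
    (he : e = d₁ • b₁ + d₂ • b₂ + d₃ • b₃)
    (hu₀n : ‖u₀‖ = 1) (hv₀n : ‖v₀‖ = 1) (hen : ‖e‖ = 1)
    (huv : ⟪u₀, v₀⟫ = 0) (hue : ⟪u₀, e⟫ = 0) (hve : ⟪v₀, e⟫ = 0)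
    (hke : ⟪⟪π b₂ b₃, ζ⟫ • b₁ + ⟪π b₃ b₁, ζ⟫ • b₂ + ⟪π b₁ b₂, ζ⟫ • b₃, e⟫ = 0) :
    ⟪π u₀ v₀, ζ⟫ = 0 := by
  have haa : a₁ * a₁ + a₂ * a₂ + a₃ * a₃ = 1 := by
    have h1 : ⟪u₀, u₀⟫ = 1 := by rw [real_inner_self_eq_norm_sq, hu₀n]; norm_num
    rw [hu, inner_comb3 i11 i22 i33 i12 i13 i23] at h1; exact h1
  have hcc : c₁ * c₁ + c₂ * c₂ + c₃ * c₃ = 1 := by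
    have h1 : ⟪v₀, v₀⟫ = 1 := by rw [real_inner_self_eq_norm_sq, hv₀n]; norm_num
    rw [hv, inner_comb3 i11 i22 i33 i12 i13 i23] at h1; exact h1
  have hdd : d₁ * d₁ + d₂ * d₂ + d₃ * d₃ = 1 := by
    have h1 : ⟪e, e⟫ = 1 := by rw [real_inner_self_eq_norm_sq, hen]; norm_num
    rw [he, inner_comb3 i11 i22 i33 i12 i13 i23] at h1; exact h1
  have hac : a₁ * c₁ + a₂ * c₂ + a₃ * c₃ = 0 := by
    have h1 := huv; rw [hu, hv, inner_comb3 i11 i22 i33 i12 i13 i23] at h1; exact h1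
  have had : a₁ * d₁ + a₂ * d₂ + a₃ * d₃ = 0 := by
    have h1 := hue; rw [hu, he, inner_comb3 i11 i22 i33 i12 i13 i23] at h1; exact h1
  have hcd : c₁ * d₁ + c₂ * d₂ + c₃ * d₃ = 0 := by
    have h1 := hve; rw [hv, he, inner_comb3 i11 i22 i33 i12 i13 i23] at h1; exact h1
  have hdt : d₁ * ⟪π b₂ b₃, ζ⟫ + d₂ * ⟪π b₃ b₁, ζ⟫ + d₃ * ⟪π b₁ b₂, ζ⟫ = 0 := by
    rw [he, inner_comb3 i11 i22 i33 i12 i13 i23] at hke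
    linear_combination hke
  have hcl := cross_lemma a₁ a₂ a₃ c₁ c₂ c₃ d₁ d₂ d₃
    ⟪π b₂ b₃, ζ⟫ ⟪π b₃ b₁, ζ⟫ ⟪π b₁ b₂, ζ⟫
    (by linear_combination haa) (by linear_combination hcc) (by linear_combination hdd)
    hac had hcd hdt
  rw [hu, hv]
  have r21 : π b₂ b₁ = -π b₁ b₂ := pi_anti π hπalt b₂ b₁
  have r31 : π b₃ b₁ = -π b₁ b₃ := pi_anti π hπalt b₃ b₁
  have r32 : π b₃ b₂ = -π b₂ b₃ := pi_anti π hπalt b₃ b₂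
  simp only [map_add, map_smul, LinearMap.add_apply, LinearMap.smul_apply,
    inner_add_left, real_inner_smul_left, hπalt, inner_zero_left, mul_zero,
    r21, r31, r32, inner_neg_left, mul_neg]
  have r13 : ⟪π b₁ b₃, ζ⟫ = -⟪π b₃ b₁, ζ⟫ := by rw [r31, inner_neg_left]; ring
  rw [r13]
  linear_combination hcl
end

section
variable {V : Type*} [NormedAddCommGroup V] [InnerProductSpace ℝ V] [FiniteDimensional ℝ V]

lemma main_case (π : V →ₗ[ℝ] V →ₗ[ℝ] V) (hπalt : ∀ x : V, π x x = 0)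
    (hπvp : ∀ u v : V, Orthonormal ℝ ![u, v] → Orthonormal ℝ ![u, v, π u v])
    (X Y Z W : Submodule ℝ V)
    (hX : Module.finrank ℝ X = 3) (hYpos : 0 < Module.finrank ℝ Y)
    (hXY : ∀ x ∈ X, ∀ y ∈ Y, ⟪x, y⟫ = 0)
    (hXZ : ∀ x ∈ X, ∀ w ∈ Z, ⟪x, w⟫ = 0)
    (hYZ : ∀ y ∈ Y, ∀ w ∈ Z, ⟪y, w⟫ = 0)
    (hsup : X ⊔ Y ⊔ Z = ⊤)
    (ζ₁ ζ₂ : V) (hζ₁Z : ζ₁ ∈ Z) (hζ₂Z : ζ₂ ∈ Z)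
    (hZspan : Submodule.span ℝ {ζ₁, ζ₂} = Z)
    (hW : ∀ f : V, f ∈ Y → ‖f‖ = 1 → ∃ t : V, ∀ q : V,
      (∀ x ∈ X, ⟪x, q⟫ = 0) → ⟪f, q⟫ = 0 → ⟪t, q⟫ = 0 → q ∈ W) :
    ∃ (u v z : V) (α : ℝ) (e f : V),
      Orthonormal ℝ ![u, v, π u v, z] ∧ u ∈ X ∧ v ∈ X ∧
      e ∈ X ∧ f ∈ Y ∧ ‖e‖ = 1 ∧ ‖f‖ = 1 ∧
      π u v = Real.cos α • e + Real.sin α • f ∧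
      z = -Real.sin α • e + Real.cos α • f ∧
      π u z ∈ W := by
  -- an orthonormal basis of X
  obtain ⟨b₁, hb₁X, hb₁n, -⟩ := exists_unit_perp X ![] (by rw [hX]; norm_num)
  obtain ⟨b₂, hb₂X, hb₂n, hp2⟩ := exists_unit_perp X ![b₁] (by rw [hX]; norm_num)
  obtain ⟨b₃, hb₃X, hb₃n, hp3⟩ := exists_unit_perp X ![b₁, b₂] (by rw [hX]; norm_num)
  have i12 : ⟪b₁, b₂⟫ = 0 := by simpa using hp2 0
  have i13 : ⟪b₁, b₃⟫ = 0 := by simpa using hp3 0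
  have i23 : ⟪b₂, b₃⟫ = 0 := by simpa using hp3 1
  have i11 : ⟪b₁, b₁⟫ = 1 := by rw [real_inner_self_eq_norm_sq, hb₁n]; norm_num
  have i22 : ⟪b₂, b₂⟫ = 1 := by rw [real_inner_self_eq_norm_sq, hb₂n]; norm_num
  have i33 : ⟪b₃, b₃⟫ = 1 := by rw [real_inner_self_eq_norm_sq, hb₃n]; norm_num
  have hXspanb : Submodule.span ℝ {b₁, b₂, b₃} = X :=
    span_triple_eq hX hb₁X hb₂X hb₃X (onb3 hb₁n hb₂n hb₃n i12 i13 i23)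
  -- the vectors representing the Z-components of the product on X
  set k₁ : V := ⟪π b₂ b₃, ζ₁⟫ • b₁ + ⟪π b₃ b₁, ζ₁⟫ • b₂ + ⟪π b₁ b₂, ζ₁⟫ • b₃ with hk₁def
  set k₂ : V := ⟪π b₂ b₃, ζ₂⟫ • b₁ + ⟪π b₃ b₁, ζ₂⟫ • b₂ + ⟪π b₁ b₂, ζ₂⟫ • b₃ with hk₂def
  obtain ⟨e, heX, hen, hpe⟩ := exists_unit_perp X ![k₁, k₂] (by rw [hX]; norm_num)
  have hk₁e : ⟪k₁, e⟫ = 0 := by simpa using hpe 0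
  have hk₂e : ⟪k₂, e⟫ = 0 := by simpa using hpe 1
  obtain ⟨u₀, hu₀X, hu₀n, hpu⟩ := exists_unit_perp X ![e, e] (by rw [hX]; norm_num)
  have heu₀ : ⟪e, u₀⟫ = 0 := by simpa using hpu 0
  obtain ⟨v₀, hv₀X, hv₀n, hpv⟩ := exists_unit_perp X ![e, u₀] (by rw [hX]; norm_num)
  have hev₀ : ⟪e, v₀⟫ = 0 := by simpa using hpv 0
  have hu₀v₀ : ⟪u₀, v₀⟫ = 0 := by simpa using hpv 1
  have hue : ⟪u₀, e⟫ = 0 := by rw [real_inner_comm]; exact heu₀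
  have hve : ⟪v₀, e⟫ = 0 := by rw [real_inner_comm]; exact hev₀
  have hXspanu : Submodule.span ℝ {u₀, v₀, e} = X :=
    span_triple_eq hX hu₀X hv₀X heX (onb3 hu₀n hv₀n hen hu₀v₀ hue hve)
  -- coordinates
  obtain ⟨a₁, a₂, a₃, hua⟩ := mem_span_triple (x := u₀) (hXspanb ▸ hu₀X)
  obtain ⟨c₁, c₂, c₃, hva⟩ := mem_span_triple (x := v₀) (hXspanb ▸ hv₀X)
  obtain ⟨d₁, d₂, d₃, hea⟩ := mem_span_triple (x := e) (hXspanb ▸ heX)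
  have hPζ₁ : ⟪π u₀ v₀, ζ₁⟫ = 0 :=
    key_perp π hπalt i11 i22 i33 i12 i13 i23 hua hva hea hu₀n hv₀n hen hu₀v₀ hue hve hk₁e
  have hPζ₂ : ⟪π u₀ v₀, ζ₂⟫ = 0 :=
    key_perp π hπalt i11 i22 i33 i12 i13 i23 hua hva hea hu₀n hv₀n hen hu₀v₀ hue hve hk₂e
  -- the decomposition of π u₀ v₀
  set c : ℝ := ⟪π u₀ v₀, e⟫ with hcdef
  have honbuv := hπvp u₀ v₀ (onb2 hu₀n hv₀n hu₀v₀)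
  have hπn : ‖π u₀ v₀‖ = 1 := by simpa using honbuv.1 2
  have hcb : |c| ≤ 1 := by
    calc |c| ≤ ‖π u₀ v₀‖ * ‖e‖ := abs_real_inner_le_norm _ _
    _ = 1 := by rw [hπn, hen]; norm_num
  set w : V := π u₀ v₀ - c • e with hwdef
  have hwu₀ : ⟪u₀, w⟫ = 0 := by
    rw [hwdef, inner_sub_right, real_inner_smul_right,
      show ⟪u₀, π u₀ v₀⟫ = 0 from by rw [real_inner_comm]; exact (pi_perp π hπalt hπvp u₀ v₀).1,
      hue]
    ring
  have hwv₀ : ⟪v₀, w⟫ = 0 := by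
    rw [hwdef, inner_sub_right, real_inner_smul_right,
      show ⟪v₀, π u₀ v₀⟫ = 0 from by rw [real_inner_comm]; exact (pi_perp π hπalt hπvp u₀ v₀).2,
      hve]
    ring
  have hwe : ⟪e, w⟫ = 0 := by
    rw [hwdef, inner_sub_right, real_inner_smul_right, real_inner_self_eq_norm_sq, hen,
      show ⟪e, π u₀ v₀⟫ = c from by rw [real_inner_comm]]
    ring
  have hwX : ∀ x ∈ X, ⟪x, w⟫ = 0 := by
    intro x hx
    exact perp_of_span (by rintro y (rfl | rfl | rfl); exacts [hwu₀, hwv₀, hwe]) x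
      (hXspanu ▸ hx)
  have hζw : ∀ ζ' : V, ζ' ∈ Z → ⟪π u₀ v₀, ζ'⟫ = 0 → ⟪ζ', w⟫ = 0 := by
    intro ζ' hz hp
    rw [hwdef, inner_sub_right, real_inner_smul_right,
      show ⟪ζ', π u₀ v₀⟫ = 0 from by rw [real_inner_comm]; exact hp,
      show ⟪ζ', e⟫ = 0 from by rw [real_inner_comm]; exact hXZ e heX ζ' hz]
    ring
  have hwZ : ∀ zz ∈ Z, ⟪zz, w⟫ = 0 := by
    intro zz hzz
    refine perp_of_span ?_ zz (hZspan ▸ hzz)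
    rintro y (rfl | rfl)
    exacts [hζw _ hζ₁Z hPζ₁, hζw _ hζ₂Z hPζ₂]
  have hwY : w ∈ Y := mem_third hXY hXZ hYZ hsup w hwX hwZ
  -- the angle
  set α : ℝ := Real.arccos c with hαdef
  have hcos : Real.cos α = c := Real.cos_arccos (by linarith [abs_le.1 hcb]) (by linarith [abs_le.1 hcb])
  have hwnorm : ‖w‖ ^ 2 = 1 - c ^ 2 := by
    rw [← real_inner_self_eq_norm_sq, hwdef]
    rw [inner_sub_left, inner_sub_right, inner_sub_right, real_inner_smul_left,
      real_inner_smul_left, real_inner_smul_right, real_inner_smul_right,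
      real_inner_self_eq_norm_sq, real_inner_self_eq_norm_sq, hπn, hen,
      show ⟪e, π u₀ v₀⟫ = c from by rw [real_inner_comm], ← hcdef]
    ring
  have hsin : Real.sin α = ‖w‖ := by
    rw [hαdef, Real.sin_arccos, show (1 : ℝ) - c ^ 2 = ‖w‖ ^ 2 by linarith,
      Real.sqrt_sq (norm_nonneg w)]
  -- the vector f
  obtain ⟨f, hfY, hfn, hπuv⟩ :
      ∃ f : V, f ∈ Y ∧ ‖f‖ = 1 ∧ π u₀ v₀ = Real.cos α • e + Real.sin α • f := by
    by_cases hw0 : w = 0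
    · obtain ⟨f, hfY, hfn, -⟩ := exists_unit_perp Y ![] hYpos
      refine ⟨f, hfY, hfn, ?_⟩
      rw [hcos, hsin, hw0, norm_zero, zero_smul, add_zero]
      have h0 : π u₀ v₀ - c • e = 0 := by rw [← hwdef]; exact hw0
      exact sub_eq_zero.1 h0
    · refine ⟨‖w‖⁻¹ • w, Y.smul_mem _ hwY, ?_, ?_⟩
      · have hnw : ‖w‖ ≠ 0 := by simpa using hw0
        rw [norm_smul]; simp [abs_of_nonneg (norm_nonneg w), inv_mul_cancel₀ hnw]
      · have hnw : ‖w‖ ≠ 0 := by simpa using hw0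
        rw [hcos, hsin, smul_smul, mul_inv_cancel₀ hnw, one_smul]
        rw [hwdef]; abel
  -- the criterion and core
  obtain ⟨t, htcrit⟩ := hW f hfY hfn
  have hef : ⟪e, f⟫ = 0 := hXY e heX f hfY
  have hu₀f : ⟪u₀, f⟫ = 0 := hXY u₀ hu₀X f hfY
  have hv₀f : ⟪v₀, f⟫ = 0 := hXY v₀ hv₀X f hfY
  obtain ⟨u, v, humem, hvmem, honb4, hπeq, hWmem⟩ :=
    core π hπalt hπvp u₀ v₀ e f t hu₀n hv₀n hen hfn hu₀v₀ hue hve hu₀f hv₀f hef α hπuv W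
      (by
        intro q h1 h2 h3 h4 h5
        refine htcrit q ?_ h4 h5
        intro x hx
        exact perp_of_span (by rintro y (rfl | rfl | rfl); exacts [h1, h2, h3]) x
          (hXspanu ▸ hx))
  have hspanX : Submodule.span ℝ {u₀, v₀} ≤ X := by
    rw [Submodule.span_le]; rintro y (rfl | rfl); exacts [hu₀X, hv₀X]
  exact ⟨u, v, _, α, e, f, honb4, hspanX humem, hspanX hvmem, heX, hfY, hen, hfn,
    hπeq, rfl, hWmem⟩
end


theorem stmt13
    {V : Type*} [NormedAddCommGroup V] [InnerProductSpace ℝ V]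
    [FiniteDimensional ℝ V] (hdim : Module.finrank ℝ V = 7)
    (π : V →ₗ[ℝ] V →ₗ[ℝ] V) (hπalt : ∀ x : V, π x x = 0)
    (hπvp : ∀ u v : V, Orthonormal ℝ ![u, v] → Orthonormal ℝ ![u, v, π u v])
    (X Y Z : Submodule ℝ V)
    (hX : Module.finrank ℝ X = 3) (hY : 2 ≤ Module.finrank ℝ Y) (hZ : Z ≠ ⊥)
    (hXY : ∀ x ∈ X, ∀ y ∈ Y, ⟪x, y⟫ = 0)
    (hXZ : ∀ x ∈ X, ∀ w ∈ Z, ⟪x, w⟫ = 0)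
    (hYZ : ∀ y ∈ Y, ∀ w ∈ Z, ⟪y, w⟫ = 0)
    (hsup : X ⊔ Y ⊔ Z = ⊤) :
    ∃ (u v z : V) (α : ℝ) (e f : V),
      Orthonormal ℝ ![u, v, π u v, z] ∧ u ∈ X ∧ v ∈ X ∧
      e ∈ X ∧ f ∈ Y ∧ ‖e‖ = 1 ∧ ‖f‖ = 1 ∧
      π u v = Real.cos α • e + Real.sin α • f ∧
      z = -Real.sin α • e + Real.cos α • f ∧
      (Module.finrank ℝ Y = 3 ∧ Module.finrank ℝ Z = 1 → π u z ∈ Y) ∧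
      (Module.finrank ℝ Y = 2 ∧ Module.finrank ℝ Z = 2 → π u z ∈ Z) := by
  -- dimension bookkeeping
  have hXYbot : X ⊓ Y = ⊥ := by
    rw [Submodule.eq_bot_iff]
    intro x hx
    exact inner_self_eq_zero.1 (hXY x hx.1 x hx.2)
  have hXY_Zbot : (X ⊔ Y) ⊓ Z = ⊥ := by
    rw [Submodule.eq_bot_iff]
    rintro x ⟨hx1, hx2⟩
    obtain ⟨a, ha, b, hb, rfl⟩ := Submodule.mem_sup.1 hx1
    have h0 : ⟪a + b, a + b⟫ = 0 := by
      rw [inner_add_left, hXZ a ha _ hx2, hYZ b hb _ hx2]; ring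
    exact inner_self_eq_zero.1 h0
  have hfr1 := Submodule.finrank_sup_add_finrank_inf_eq X Y
  have hfr2 := Submodule.finrank_sup_add_finrank_inf_eq (X ⊔ Y) Z
  rw [hXYbot] at hfr1
  rw [hXY_Zbot, hsup] at hfr2
  have htop : Module.finrank ℝ (⊤ : Submodule ℝ V) = 7 := by rw [finrank_top]; exact hdim
  have hZpos : Module.finrank ℝ Z ≠ 0 := fun h => hZ (Submodule.finrank_eq_zero.1 h)
  rw [finrank_bot] at hfr1 hfr2
  have hcases : (Module.finrank ℝ Y = 3 ∧ Module.finrank ℝ Z = 1)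
      ∨ (Module.finrank ℝ Y = 2 ∧ Module.finrank ℝ Z = 2) := by omega
  rcases hcases with ⟨hY3, hZ1⟩ | ⟨hY2, hZ2⟩
  · -- case (3,1) : target Y
    obtain ⟨ζ₁, hζ₁Z, hζ₁n, -⟩ := exists_unit_perp Z ![] (by rw [hZ1]; norm_num)
    have hZspan : Submodule.span ℝ {ζ₁, ζ₁} = Z := by
      rw [Set.pair_eq_singleton]
      exact span_single_eq hZ1 hζ₁Z hζ₁n
    obtain ⟨u, v, z, α, e, f, h1, h2, h3, h4, h5, h6, h7, h8, h9, h10⟩ :=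
      main_case π hπalt hπvp X Y Z Y hX (by omega) hXY hXZ hYZ hsup ζ₁ ζ₁ hζ₁Z hζ₁Z hZspan
        (by
          intro f hfY hfn
          refine ⟨ζ₁, ?_⟩
          intro q hqX hqf hqζ
          refine mem_third hXY hXZ hYZ hsup q hqX ?_
          intro zz hzz
          exact perp_of_span (by rintro y (rfl | rfl) <;> exact hqζ) zz (hZspan ▸ hzz))
    exact ⟨u, v, z, α, e, f, h1, h2, h3, h4, h5, h6, h7, h8, h9,
      fun _ => h10, fun h => absurd h.1 (by omega)⟩
  · -- case (2,2) : target Z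
    obtain ⟨ζ₁, hζ₁Z, hζ₁n, -⟩ := exists_unit_perp Z ![] (by rw [hZ2]; norm_num)
    obtain ⟨ζ₂, hζ₂Z, hζ₂n, hpζ⟩ := exists_unit_perp Z ![ζ₁] (by rw [hZ2]; norm_num)
    have hζζ : ⟪ζ₁, ζ₂⟫ = 0 := by simpa using hpζ 0
    have hZspan : Submodule.span ℝ {ζ₁, ζ₂} = Z :=
      span_pair_eq hZ2 hζ₁Z hζ₂Z (onb2 hζ₁n hζ₂n hζζ)
    have hsup' : X ⊔ Z ⊔ Y = ⊤ := by
      rw [sup_assoc, sup_comm Z Y, ← sup_assoc, hsup]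
    obtain ⟨u, v, z, α, e, f, h1, h2, h3, h4, h5, h6, h7, h8, h9, h10⟩ :=
      main_case π hπalt hπvp X Y Z Z hX (by omega) hXY hXZ hYZ hsup ζ₁ ζ₂ hζ₁Z hζ₂Z hZspan
        (by
          intro f hfY hfn
          obtain ⟨f', hf'Y, hf'n, hpf⟩ := exists_unit_perp Y ![f] (by rw [hY2]; norm_num)
          have hff' : ⟪f, f'⟫ = 0 := by simpa using hpf 0
          have hYspan : Submodule.span ℝ {f, f'} = Y :=
            span_pair_eq hY2 hfY hf'Y (onb2 hfn hf'n hff')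
          refine ⟨f', ?_⟩
          intro q hqX hqf hqf'
          refine mem_third (Y := Z) (Z := Y) hXZ hXY
            (fun y hy w hw => by rw [real_inner_comm]; exact hYZ w hw y hy) hsup' q hqX ?_
          intro yy hyy
          exact perp_of_span (by rintro y (rfl | rfl); exacts [hqf, hqf']) yy (hYspan ▸ hyy))
    exact ⟨u, v, z, α, e, f, h1, h2, h3, h4, h5, h6, h7, h8, h9,
      fun h => absurd h.1 (by omega), fun _ => h10⟩
end

section
/- Let U ⊆ V be a 2-dimensional subspace, let x ∈ U^⊥, and let P_U denote the orthogonal projection of V onto U. Then for any two unit vectors v, v' ∈ U, ‖P_U(π(x, v))‖ = ‖P_U(π(x, v'))‖. -/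
/-!
For `x ⊥ U` the map `w ↦ P_U (π x w)` is a skew endomorphism of `U`: normalizing `x` and
`u ∈ U` and using that `{x, u, π x u}` is orthonormal gives `⟪u, π x u⟫ = 0`. In an orthonormal
basis of a plane a skew map has matrix `[[0, -a], [a, 0]]`, so it multiplies every norm by `|a|`.
-/

open scoped RealInnerProductSpace

section SkewMap

variable {E : Type*} [NormedAddCommGroup E] [InnerProductSpace ℝ E]

theorem inner_map_swap_of_inner_map_self_eq_zero {T : E →ₗ[ℝ] E} (hT : ∀ w, ⟪w, T w⟫ = 0)
    (u v : E) : ⟪u, T v⟫ = -⟪v, T u⟫ := by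
  have huv := hT (u + v)
  simp only [map_add, inner_add_left, inner_add_right, hT] at huv
  linarith

theorem exists_norm_map_eq_mul_norm_of_inner_map_self_eq_zero
    (hE : Module.finrank ℝ E = 2) {T : E →ₗ[ℝ] E} (hT : ∀ w, ⟪w, T w⟫ = 0) :
    ∃ c, ∀ w, ‖T w‖ = c * ‖w‖ := by
  have : FiniteDimensional ℝ E := Module.finite_of_finrank_eq_succ hE
  let b := (stdOrthonormalBasis ℝ E).reindex (finCongr hE)
  set a := ⟪b 0, T (b 1)⟫
  refine ⟨|a|, fun w => ?_⟩
  have hw : w = ⟪b 0, w⟫ • b 0 + ⟪b 1, w⟫ • b 1 := by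
    simpa only [Fin.sum_univ_two] using (b.sum_repr' w).symm
  have hTw0 : ⟪b 0, T w⟫ = ⟪b 1, w⟫ * a := by
    nth_rw 1 [hw]
    simp only [map_add, map_smul, inner_add_right, real_inner_smul_right, hT]
    ring
  have hTw1 : ⟪b 1, T w⟫ = -(⟪b 0, w⟫ * a) := by
    nth_rw 1 [hw]
    simp only [map_add, map_smul, inner_add_right, real_inner_smul_right, hT,
      inner_map_swap_of_inner_map_self_eq_zero hT (b 1) (b 0)]
    ring
  rw [← pow_left_inj₀ (norm_nonneg _) (by positivity) two_ne_zero, mul_pow, sq_abs,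
    ← b.sum_sq_inner_right, ← b.sum_sq_inner_right, Fin.sum_univ_two, Fin.sum_univ_two,
    hTw0, hTw1]
  ring

end SkewMap

theorem orthonormal_vecCons_two {E : Type*} [NormedAddCommGroup E] [InnerProductSpace ℝ E]
    {a b : E} (ha : ‖a‖ = 1) (hb : ‖b‖ = 1) (hab : ⟪a, b⟫ = 0) : Orthonormal ℝ ![a, b] := by
  rw [orthonormal_iff_ite]
  intro i j
  fin_cases i <;> fin_cases j <;> simp [ha, hb, hab, real_inner_comm]

theorem inner_self_vectorProduct_eq_zero {V : Type*} [NormedAddCommGroup V] [InnerProductSpace ℝ V]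
    (π : V →ₗ[ℝ] V →ₗ[ℝ] V)
    (hπvp : ∀ u v : V, Orthonormal ℝ ![u, v] → Orthonormal ℝ ![u, v, π u v])
    {x u : V} (hxu : ⟪x, u⟫ = 0) : ⟪u, π x u⟫ = 0 := by
  rcases eq_or_ne x 0 with rfl | hx
  · simp
  rcases eq_or_ne u 0 with rfl | hu
  · simp
  have hon : Orthonormal ℝ ![‖x‖⁻¹ • x, ‖u‖⁻¹ • u] :=
    orthonormal_vecCons_two (norm_smul_inv_norm hx) (norm_smul_inv_norm hu)
      (by simp [real_inner_smul_left, real_inner_smul_right, hxu])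
  have h12 := (hπvp _ _ hon).2 (show (1 : Fin 3) ≠ 2 by decide)
  simpa [real_inner_smul_left, real_inner_smul_right, hx, hu] using h12

theorem stmt17_general
    {V : Type*} [NormedAddCommGroup V] [InnerProductSpace ℝ V]
    [FiniteDimensional ℝ V]
    (π : V →ₗ[ℝ] V →ₗ[ℝ] V)
    (hπvp : ∀ u v : V, Orthonormal ℝ ![u, v] → Orthonormal ℝ ![u, v, π u v])
    (U : Submodule ℝ V) (hU : Module.finrank ℝ U = 2)
    (x : V) (hx : x ∈ Uᗮ)
    (v v' : V) (hv : v ∈ U) (hv' : v' ∈ U) (hv1 : ‖v‖ = 1) (hv1' : ‖v'‖ = 1) :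
    ‖U.orthogonalProjectionOnto (π x v)‖ = ‖U.orthogonalProjectionOnto (π x v')‖ := by
  let T : U →ₗ[ℝ] U := U.orthogonalProjectionOnto.toLinearMap ∘ₗ π x ∘ₗ U.subtype
  have hT : ∀ w : U, ⟪w, T w⟫ = 0 := fun w => by
    simpa [T] using
      inner_self_vectorProduct_eq_zero π hπvp (Submodule.inner_left_of_mem_orthogonal w.2 hx)
  obtain ⟨c, hc⟩ := exists_norm_map_eq_mul_norm_of_inner_map_self_eq_zero hU hT
  calc ‖U.orthogonalProjectionOnto (π x v)‖ = c * ‖v‖ := hc ⟨v, hv⟩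
    _ = c * ‖v'‖ := by rw [hv1, hv1']
    _ = ‖U.orthogonalProjectionOnto (π x v')‖ := (hc ⟨v', hv'⟩).symm

theorem stmt17
    {V : Type*} [NormedAddCommGroup V] [InnerProductSpace ℝ V]
    [FiniteDimensional ℝ V] (hdim : Module.finrank ℝ V = 7)
    (π : V →ₗ[ℝ] V →ₗ[ℝ] V) (hπalt : ∀ x : V, π x x = 0)
    (hπvp : ∀ u v : V, Orthonormal ℝ ![u, v] → Orthonormal ℝ ![u, v, π u v])
    (U : Submodule ℝ V) (hU : Module.finrank ℝ U = 2)
    (x : V) (hx : x ∈ Uᗮ)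
    (v v' : V) (hv : v ∈ U) (hv' : v' ∈ U) (hv1 : ‖v‖ = 1) (hv1' : ‖v'‖ = 1) :
    ‖U.orthogonalProjectionOnto (π x v)‖ = ‖U.orthogonalProjectionOnto (π x v')‖ :=
  stmt17_general π hπvp U hU x hx v v' hv hv' hv1 hv1'
end
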